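/- arXiv:0708.2282 — 10 statements merged into one kernel-verified Lean document; each statement's English description precedes it below -/
import Mathlib

section
/- Let n ≥ 1 and let B be a set of points of PG(n,2). Let d = d(B) be the projective dimension of the subspace of PG(n,2) spanned by B. Then B is a minimal blocking set in PG(n,2) if and only if d is odd, B consists of exactly d+2 points, and no d+1 points of B lie in a common hyperplane of the spanned subspace (equivalently, every subset of B of size d+1 has the same linear span as B). -/
/-- A blocking set in `PG(n,q)` (points: 1-dimensional subspaces of `K^(n+1)`,
hyperplanes: `n`-dimensional subspaces): a set of points meeting every hyperplane. -/
def IsBlockingSet {K : Type*} [Field K] {n : ℕ}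
    (B : Set (Projectivization K (Fin (n + 1) → K))) : Prop :=
  ∀ W : Submodule K (Fin (n + 1) → K), Module.finrank K W = n →
    ∃ x ∈ B, x.rep ∈ W

/-- A minimal blocking set: a blocking set no proper subset of which is a blocking set. -/
def IsMinimalBlockingSet {K : Type*} [Field K] {n : ℕ}
    (B : Set (Projectivization K (Fin (n + 1) → K))) : Prop :=
  IsBlockingSet B ∧ ∀ B' ⊂ B, ¬ IsBlockingSet B'

/-- The linear span of (representative vectors of) a set of projective points;
the projective dimension `d(B)` is `finrank` of this span minus one. -/
noncomputable def projSpan {K : Type*} [Field K] {n : ℕ}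
    (B : Set (Projectivization K (Fin (n + 1) → K))) : Submodule K (Fin (n + 1) → K) :=
  Submodule.span K (Projectivization.rep '' B)

/-!
Over `𝔽₂` a hyperplane is the kernel of a nonzero functional `f`, and a point lies off it exactly
when `f` takes the value `1` there. So `B` fails to block iff some functional is `1` on all of `B`,
and by duality this happens iff every zero-sum subset of `B` has even size: `B` blocks iff it
contains an odd zero-sum subset. Hence `B` is a minimal blocking set iff `B` itself is its only odd
zero-sum subset; passing to complements, this says that `B` has odd size, is linearly dependent,
and every proper subset of `B` is independent, i.e. `B` is an odd circuit. A set spanning an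
`r`-dimensional space is a circuit exactly when it has `r + 1` elements, each `r` of which still
span; then `d = r - 1` is odd iff `|B| = d + 2` is.
-/

open Module Submodule Finset

theorem Submodule.finrank_add_one_eq_iff_exists_ker_eq {K V : Type*} [Field K] [AddCommGroup V]
    [Module K V] [FiniteDimensional K V] {W : Submodule K V} :
    finrank K W + 1 = finrank K V ↔ ∃ f : Dual K V, f ≠ 0 ∧ LinearMap.ker f = W := by
  constructor
  · intro hW
    obtain ⟨f, hf, hWf⟩ :=
      W.exists_dual_map_eq_bot_of_lt_top (lt_top_of_finrank_lt_finrank (by omega)) inferInstance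
    refine ⟨f, hf, (eq_of_le_of_finrank_eq (LinearMap.le_ker_iff_map.2 hWf) ?_).symm⟩
    have := f.finrank_ker_add_one_of_ne_zero hf
    omega
  · rintro ⟨f, hf, rfl⟩
    exact f.finrank_ker_add_one_of_ne_zero hf

theorem minimal_coe_finset_iff {α : Type*} {P : Set α → Prop} {Q : Finset α → Prop}
    (hPQ : ∀ s, P s ↔ ∃ t : Finset α, ↑t ⊆ s ∧ Q t) {T : Finset α} :
    Minimal P ↑T ↔ Minimal Q T := by
  constructor
  · rintro ⟨hT, hmin⟩
    obtain ⟨t, htT, ht⟩ := (hPQ _).1 hT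
    have hTt : T ⊆ t := coe_subset.1 (hmin ((hPQ _).2 ⟨t, subset_rfl, ht⟩) htT)
    refine ⟨by rwa [subset_antisymm (coe_subset.1 htT) hTt] at ht, fun t' ht' ht'T => ?_⟩
    exact coe_subset.1 (hmin ((hPQ _).2 ⟨t', subset_rfl, ht'⟩) (coe_subset.2 ht'T))
  · rintro ⟨hT, hmin⟩
    refine ⟨(hPQ _).2 ⟨T, subset_rfl, hT⟩, fun s hs hsT => ?_⟩
    obtain ⟨t, hts, ht⟩ := (hPQ _).1 hs
    exact (coe_subset.2 (hmin ht (coe_subset.1 (hts.trans hsT)))).trans hts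

theorem isMinimalBlockingSet_iff_minimal {K : Type*} [Field K] {n : ℕ}
    (B : Set (Projectivization K (Fin (n + 1) → K))) :
    IsMinimalBlockingSet B ↔ Minimal IsBlockingSet B :=
  minimal_iff_forall_lt.symm

section Circuit

variable {ι K V : Type*} [Field K] [AddCommGroup V] [Module K V] {v : ι → V}

theorem linearIndepOn_iff_ncard_eq_finrank_span {s : Set ι} (hs : s.Finite) :
    LinearIndepOn K v s ↔ s.ncard = finrank K (span K (v '' s)) := by
  have := hs.fintype
  rw [LinearIndepOn, linearIndependent_iff_card_eq_finrank_span, Set.finrank, Set.image_eq_range,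
    ← Nat.card_eq_fintype_card, Nat.card_coe_set_eq]

theorem span_image_erase_eq_of_not_linearIndepOn [DecidableEq ι] {T : Finset ι} {i : ι}
    (hi : i ∈ T) (hind : LinearIndepOn K v ↑(T.erase i)) (hdep : ¬ LinearIndepOn K v ↑T) :
    span K (v '' ↑(T.erase i)) = span K (v '' T) := by
  have hT : (T : Set ι) = insert i ↑(T.erase i) := by simp [hi]
  rw [hT] at hdep ⊢
  rw [Set.image_insert_eq, span_insert_eq_span]
  by_contra h
  exact hdep (hind.notMem_span_iff.1 h).1

theorem circuit_iff_card_eq_finrank_add_one [DecidableEq ι] {T : Finset ι} :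
    (¬ LinearIndepOn K v ↑T ∧ ∀ i ∈ T, LinearIndepOn K v ↑(T.erase i)) ↔
      T.card = finrank K (span K (v '' T)) + 1 ∧
        ∀ S ⊆ (T : Set ι), S.ncard = finrank K (span K (v '' T)) →
          span K (v '' S) = span K (v '' T) := by
  set r := finrank K (span K (v '' T))
  have hli : ∀ S ⊆ (T : Set ι), LinearIndepOn K v S ↔ S.ncard = finrank K (span K (v '' S)) :=
    fun S hS => linearIndepOn_iff_ncard_eq_finrank_span (T.finite_toSet.subset hS)
  have herase : ∀ i ∈ T, (↑(T.erase i) : Set ι).ncard = T.card - 1 := fun i hi => by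
    rw [Set.ncard_coe_finset, card_erase_of_mem hi]
  constructor
  · rintro ⟨hdep, hind⟩
    have hspan : ∀ i ∈ T, span K (v '' ↑(T.erase i)) = span K (v '' T) := fun i hi =>
      span_image_erase_eq_of_not_linearIndepOn hi (hind i hi) hdep
    obtain ⟨i, hi⟩ : T.Nonempty := by
      rw [nonempty_iff_ne_empty]
      rintro rfl
      exact hdep (by simp)
    have hcard : T.card = r + 1 := by
      have := (hli _ (coe_subset.2 (erase_subset i T))).1 (hind i hi)
      rw [hspan i hi, herase i hi] at this
      have := card_pos.2 ⟨i, hi⟩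
      omega
    refine ⟨hcard, fun S hST hS => ?_⟩
    obtain ⟨j, hjT, hjS⟩ : ∃ j ∈ T, j ∉ S := by
      by_contra! h
      have := Set.ncard_le_ncard (fun x hx => h x hx) (T.finite_toSet.subset hST)
      rw [Set.ncard_coe_finset] at this
      omega
    have hSj : S = ↑(T.erase j) := Set.eq_of_subset_of_ncard_le
      (fun x hx => mem_coe.2 (mem_erase.2 ⟨by rintro rfl; exact hjS hx, hST hx⟩))
      (by rw [herase j hjT]; omega) (finite_toSet _)
    rw [hSj, hspan j hjT]
  · rintro ⟨hcard, hS⟩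
    refine ⟨fun hind => ?_, fun i hi => ?_⟩
    · have := (hli _ subset_rfl).1 hind
      rw [Set.ncard_coe_finset] at this
      omega
    · have hE : (↑(T.erase i) : Set ι).ncard = r := by rw [herase i hi]; omega
      rw [hli _ (coe_subset.2 (erase_subset i T)), hS _ (coe_subset.2 (erase_subset i T)) hE, hE]

end Circuit

theorem minimal_odd_sum_eq_zero_iff {ι M : Type*} [AddCommMonoid M] {v : ι → M} {T : Finset ι} :
    Minimal (fun t : Finset ι => Odd t.card ∧ ∑ i ∈ t, v i = 0) T ↔
      Odd T.card ∧ ∑ i ∈ T, v i = 0 ∧ ∀ t ⊂ T, t.Nonempty → ∑ i ∈ t, v i ≠ 0 := by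
  classical
  constructor
  · rintro ⟨⟨hodd, hsum⟩, hmin⟩
    refine ⟨hodd, hsum, fun t htT ⟨i, hi⟩ ht => ?_⟩
    rcases Nat.even_or_odd t.card with heven | htodd
    · have hcompl : Odd (T \ t).card ∧ ∑ j ∈ T \ t, v j = 0 := by
        refine ⟨?_, by simpa [ht, hsum] using sum_sdiff (f := v) htT.subset⟩
        rw [card_sdiff_of_subset htT.subset]
        exact Nat.Odd.sub_even (card_le_card htT.subset) hodd heven
      exact (mem_sdiff.1 (hmin hcompl sdiff_subset (htT.subset hi))).2 hi
    · exact htT.not_subset (hmin ⟨htodd, ht⟩ htT.subset)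
  · rintro ⟨hodd, hsum, hne⟩
    refine ⟨⟨hodd, hsum⟩, fun t ⟨htodd, ht⟩ htT => ?_⟩
    by_contra hTt
    exact hne t (htT.ssubset_of_not_subset hTt) (card_pos.1 htodd.pos) ht

theorem zmod_two_eq_zero_or_eq_one (a : ZMod 2) : a = 0 ∨ a = 1 := by
  revert a; decide

section CharTwo

variable {ι V : Type*} [AddCommGroup V] [Module (ZMod 2) V] {v : ι → V}

theorem Finset.sum_zmod_two_smul_eq_sum_filter (t : Finset ι) (c : ι → ZMod 2) :
    ∑ i ∈ t, c i • v i = ∑ i ∈ t with c i = 1, v i := by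
  rw [sum_filter]
  refine sum_congr rfl fun i _ => ?_
  rcases zmod_two_eq_zero_or_eq_one (c i) with h | h <;> simp [h]

theorem linearIndepOn_zmod_two_iff {s : Set ι} :
    LinearIndepOn (ZMod 2) v s ↔ ∀ t : Finset ι, ↑t ⊆ s → t.Nonempty → ∑ i ∈ t, v i ≠ 0 := by
  classical
  rw [linearIndepOn_iff']
  constructor
  · rintro h t hts ⟨i, hi⟩ hsum
    exact one_ne_zero (h t 1 hts (by simpa using hsum) i hi)
  · intro h t g hts hsum i hi
    by_contra hgi
    refine h (t.filter (g · = 1)) ((coe_subset.2 (filter_subset _ _)).trans hts)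
      ⟨i, mem_filter.2 ⟨hi, (zmod_two_eq_zero_or_eq_one (g i)).resolve_left hgi⟩⟩ ?_
    rwa [← sum_zmod_two_smul_eq_sum_filter]

theorem minimal_odd_sum_eq_zero_iff_circuit [DecidableEq ι] {T : Finset ι} :
    Minimal (fun t : Finset ι => Odd t.card ∧ ∑ i ∈ t, v i = 0) T ↔
      Odd T.card ∧ ¬ LinearIndepOn (ZMod 2) v ↑T ∧
        ∀ i ∈ T, LinearIndepOn (ZMod 2) v ↑(T.erase i) := by
  have hproper : (∀ t ⊂ T, t.Nonempty → ∑ i ∈ t, v i ≠ 0) ↔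
      ∀ i ∈ T, LinearIndepOn (ZMod 2) v ↑(T.erase i) := by
    simp only [linearIndepOn_zmod_two_iff, coe_subset, ssubset_iff_exists_subset_erase]
    exact ⟨fun h i hi t ht => h t ⟨i, hi, ht⟩, fun h t ⟨i, hi, ht⟩ => h i hi t ht⟩
  rw [minimal_odd_sum_eq_zero_iff, ← hproper]
  refine and_congr_right fun hodd => and_congr_left fun hne => ?_
  rw [linearIndepOn_zmod_two_iff]
  push Not
  refine ⟨fun hT => ⟨T, subset_rfl, card_pos.1 hodd.pos, hT⟩, fun ⟨t, htT, htne, ht⟩ => ?_⟩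
  rcases (coe_subset.1 htT).eq_or_ssubset with rfl | hssub
  · exact ht
  · exact absurd ht (hne t hssub htne)

theorem even_card_of_sum_eq_zero {f : Dual (ZMod 2) V} {t : Finset ι}
    (hf : ∀ i ∈ t, f (v i) = 1) (ht : ∑ i ∈ t, v i = 0) : Even t.card := by
  rw [← ZMod.natCast_eq_zero_iff_even]
  calc (t.card : ZMod 2) = ∑ i ∈ t, f (v i) := by simp [sum_congr rfl hf]
    _ = 0 := by rw [← map_sum, ht, map_zero]

theorem exists_dual_forall_apply_eq_one [Fintype ι]
    (h : ∀ t : Finset ι, ∑ i ∈ t, v i = 0 → Even t.card) :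
    ∃ f : Dual (ZMod 2) V, ∀ i, f (v i) = 1 := by
  classical
  let φ : (ι → ZMod 2) →ₗ[ZMod 2] V := Fintype.linearCombination (ZMod 2) v
  let ε : Dual (ZMod 2) (ι → ZMod 2) := Fintype.linearCombination (ZMod 2) 1
  -- `ε` factors through `φ` as soon as it kills `ker φ`; the parity hypothesis says exactly that.
  have hε : ε ∈ (LinearMap.ker φ).dualAnnihilator := by
    rw [mem_dualAnnihilator]
    intro c hc
    have hsum : ∑ i with c i = 1, v i = 0 := by
      rw [← sum_zmod_two_smul_eq_sum_filter]
      simpa [φ, Fintype.linearCombination_apply] using hc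
    rw [Fintype.linearCombination_apply, sum_zmod_two_smul_eq_sum_filter]
    simpa [ZMod.natCast_eq_zero_iff_even] using h _ hsum
  rw [← LinearMap.range_dualMap_eq_dualAnnihilator_ker] at hε
  obtain ⟨f, hf⟩ := hε
  refine ⟨f, fun i => ?_⟩
  simpa [φ, ε] using LinearMap.congr_fun hf (Pi.single i 1)

theorem exists_dual_ne_zero_forall_mem_apply_eq_one [Nontrivial V] {s : Set ι} [Finite s]
    (h : ∀ t : Finset ι, ↑t ⊆ s → ∑ i ∈ t, v i = 0 → Even t.card) :
    ∃ f : Dual (ZMod 2) V, f ≠ 0 ∧ ∀ i ∈ s, f (v i) = 1 := by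
  have := Fintype.ofFinite s
  obtain ⟨f, hf⟩ := exists_dual_forall_apply_eq_one (v := fun i : s => v i) fun t ht => by
    simpa using h (t.map (Function.Embedding.subtype _)) (by simp) (by simpa using ht)
  rcases s.eq_empty_or_nonempty with rfl | ⟨i, hi⟩
  · obtain ⟨x, hx⟩ := exists_ne (0 : V)
    obtain ⟨g, hg⟩ := Module.Projective.exists_dual_ne_zero (ZMod 2) hx
    exact ⟨g, fun h0 => hg (by simp [h0]), by simp⟩
  · exact ⟨f, fun h0 => by simpa [h0] using hf ⟨i, hi⟩, fun j hj => hf ⟨j, hj⟩⟩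

end CharTwo

theorem isBlockingSet_iff_exists_odd_sum_rep_eq_zero {n : ℕ}
    (B : Set (Projectivization (ZMod 2) (Fin (n + 1) → ZMod 2))) :
    IsBlockingSet B ↔ ∃ t : Finset (Projectivization (ZMod 2) (Fin (n + 1) → ZMod 2)),
      ↑t ⊆ B ∧ Odd t.card ∧ ∑ x ∈ t, x.rep = 0 := by
  have hV : finrank (ZMod 2) (Fin (n + 1) → ZMod 2) = n + 1 := finrank_fin_fun _
  constructor
  · intro hB
    by_contra! h
    obtain ⟨f, hf0, hf⟩ := exists_dual_ne_zero_forall_mem_apply_eq_one (v := Projectivization.rep)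
      (s := B) fun t htB ht => Nat.not_odd_iff_even.1 fun hodd => h t htB hodd ht
    obtain ⟨x, hxB, hx⟩ := hB (LinearMap.ker f) (by
      have := f.finrank_ker_add_one_of_ne_zero hf0
      omega)
    exact zero_ne_one ((LinearMap.mem_ker.1 hx).symm.trans (hf x hxB))
  · rintro ⟨t, htB, hodd, hsum⟩ W hW
    obtain ⟨f, -, rfl⟩ := finrank_add_one_eq_iff_exists_ker_eq.1 (by omega : finrank _ W + 1 = _)
    by_contra! h
    refine Nat.not_even_iff_odd.2 hodd (even_card_of_sum_eq_zero (f := f) (fun x hx => ?_) hsum)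
    exact (zmod_two_eq_zero_or_eq_one (f x.rep)).resolve_left (h x (htB hx))

theorem statement_0_general (n : ℕ)
    (B : Set (Projectivization (ZMod 2) (Fin (n + 1) → ZMod 2)))
    (d : ℕ) (hd : d = Module.finrank (ZMod 2) (projSpan B) - 1) :
    IsMinimalBlockingSet B ↔
      Odd d ∧ B.ncard = d + 2 ∧
        ∀ S ⊆ B, S.ncard = d + 1 → projSpan S = projSpan B := by
  classical
  obtain ⟨T, rfl⟩ := B.toFinite.exists_finset_coe
  have hpos : T.Nonempty → 1 ≤ finrank (ZMod 2) (projSpan (T : Set _)) := fun ⟨x, hx⟩ =>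
    one_le_finrank_iff.2 fun h => x.rep_nonzero (span_eq_bot.1 h _ ⟨x, hx, rfl⟩)
  unfold projSpan at hd hpos ⊢
  rw [isMinimalBlockingSet_iff_minimal,
    minimal_coe_finset_iff isBlockingSet_iff_exists_odd_sum_rep_eq_zero,
    minimal_odd_sum_eq_zero_iff_circuit, circuit_iff_card_eq_finrank_add_one,
    Set.ncard_coe_finset]
  constructor
  · rintro ⟨⟨k, hk⟩, hcard, hspan⟩
    have := hpos (card_pos.1 (by omega))
    exact ⟨⟨k - 1, by omega⟩, by omega, fun S hS hSd => hspan S hS (by omega)⟩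
  · rintro ⟨⟨k, hk⟩, hcard, hspan⟩
    exact ⟨⟨k + 1, by omega⟩, by omega, fun S hS hSr => hspan S hS (by omega)⟩

theorem statement_0 (n : ℕ) (hn : 1 ≤ n)
    (B : Set (Projectivization (ZMod 2) (Fin (n + 1) → ZMod 2)))
    (d : ℕ) (hd : d = Module.finrank (ZMod 2) (projSpan B) - 1) :
    IsMinimalBlockingSet B ↔
      Odd d ∧ B.ncard = d + 2 ∧
        ∀ S ⊆ B, S.ncard = d + 1 → projSpan S = projSpan B :=
  statement_0_general n B d hd
end

section
/- Let G be a finite 2-group and let n be a positive integer. Then G admits a 𝔠_{n+1}-cover if and only if n is even and G is isomorphic to (C_2)^n. -/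
/-- `IsCCover n 𝒞` : `𝒞` is a `𝔠ₙ`-cover of `G`, i.e. a set of `n` proper subgroups
whose union is `G` (a cover), which is irredundant (no proper subset covers `G`),
maximal (all members are maximal subgroups) and core-free (the normal core of the
intersection of the members is trivial). -/
def IsCCover {G : Type*} [Group G] (n : ℕ) (𝒞 : Finset (Subgroup G)) : Prop :=
  𝒞.card = n ∧
  (∀ M ∈ 𝒞, M ≠ ⊤) ∧
  (∀ g : G, ∃ M ∈ 𝒞, g ∈ M) ∧
  (∀ 𝒟 : Finset (Subgroup G), 𝒟 ⊂ 𝒞 → ∃ g : G, ∀ M ∈ 𝒟, g ∉ M) ∧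
  (∀ M ∈ 𝒞, IsCoatom M) ∧
  (𝒞.inf id).normalCore = ⊥

/-!
Every maximal subgroup of a finite 2-group is the kernel of a character `G → 𝔽₂`, so a maximal
cover `M₀, …, Mₙ` gives a homomorphism `Φ : G → 𝔽₂^{n+1}` whose coordinates are these characters.
The intersection of the `Mᵢ` is normal, so core-freeness makes `Φ` injective; covering says that
the all-ones vector `1` is not in the image `W`, and irredundancy puts every `1 - eᵢ` in `W`.
In characteristic 2 every even-weight vector is `x = ∑ xᵢ (1 - eᵢ)`, so `W` contains the
even-weight hyperplane and hence equals it; as `1 ∉ W`, `n + 1` is odd, and `G ≅ W ≅ 𝔽₂ⁿ`.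
Conversely, for even `n`, embedding `𝔽₂ⁿ` as the even-weight hyperplane of `𝔽₂^{n+1}` and taking
the kernels of the coordinates gives a `𝔠_{n+1}`-cover.
-/

open Subgroup

section EvenWeight

variable (ι : Type*) [Fintype ι]

def evenWeight : Submodule (ZMod 2) (ι → ZMod 2) :=
  LinearMap.ker (∑ i, LinearMap.proj i)

variable {ι}

theorem mem_evenWeight {x : ι → ZMod 2} : x ∈ evenWeight ι ↔ ∑ i, x i = 0 := by
  simp [evenWeight]

theorem one_mem_evenWeight_iff : (1 : ι → ZMod 2) ∈ evenWeight ι ↔ Even (Fintype.card ι) := by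
  simp [mem_evenWeight, ZMod.natCast_eq_zero_iff_even]

theorem finrank_evenWeight [Nonempty ι] :
    Module.finrank (ZMod 2) (evenWeight ι) = Fintype.card ι - 1 := by
  classical
  let σ : (ι → ZMod 2) →ₗ[ZMod 2] ZMod 2 := ∑ i, LinearMap.proj i
  have hσ : LinearMap.range σ = ⊤ := LinearMap.range_eq_top.mpr fun c => by
    obtain ⟨i⟩ := ‹Nonempty ι›
    exact ⟨Pi.single i c, by simp [σ]⟩
  have := LinearMap.finrank_range_add_finrank_ker σ
  rw [hσ, finrank_top, Module.finrank_self, Module.finrank_fintype_fun_eq_card] at this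
  change Module.finrank (ZMod 2) (LinearMap.ker σ) = _
  omega

variable [DecidableEq ι]

theorem one_sub_single_mem_evenWeight_iff (i : ι) :
    1 - Pi.single i 1 ∈ evenWeight ι ↔ Odd (Fintype.card ι) := by
  simp [mem_evenWeight, Finset.sum_sub_distrib, sub_eq_zero, ZMod.natCast_eq_one_iff_odd]

theorem sum_smul_one_sub_single {x : ι → ZMod 2} (hx : ∑ i, x i = 0) :
    ∑ i, x i • (1 - Pi.single i 1 : ι → ZMod 2) = x := by
  simp_rw [smul_sub, Finset.sum_sub_distrib, ← Finset.sum_smul, hx, zero_smul, zero_sub,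
    ← Pi.single_smul, smul_eq_mul, mul_one, Finset.univ_sum_single, ZModModule.neg_eq_self]

theorem evenWeight_le_of_one_sub_single_mem {W : Submodule (ZMod 2) (ι → ZMod 2)}
    (hW : ∀ i, 1 - Pi.single i 1 ∈ W) : evenWeight ι ≤ W := fun x hx => by
  rw [← sum_smul_one_sub_single (mem_evenWeight.mp hx)]
  exact W.sum_mem fun i _ => W.smul_mem _ (hW i)

theorem one_notMem_and_one_sub_single_mem_iff (W : Submodule (ZMod 2) (ι → ZMod 2)) :
    (1 ∉ W ∧ ∀ i, 1 - Pi.single i 1 ∈ W) ↔ Odd (Fintype.card ι) ∧ W = evenWeight ι := by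
  constructor
  · rintro ⟨hone, hsingle⟩
    have hle := evenWeight_le_of_one_sub_single_mem hsingle
    have hodd : Odd (Fintype.card ι) := by
      rw [← Nat.not_even_iff_odd, ← one_mem_evenWeight_iff]
      exact fun h => hone (hle h)
    refine ⟨hodd, le_antisymm (fun w hw => by_contra fun hw' => hone ?_) hle⟩
    -- for odd `|ι|`, the complement `1 - w` of an odd-weight vector `w` has even weight
    have hw1 : ∑ i, w i = 1 :=
      (by decide : ∀ a : ZMod 2, a ≠ 0 → a = 1) _ (mt mem_evenWeight.mpr hw')
    have : 1 - w ∈ evenWeight ι := by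
      simp [mem_evenWeight, Finset.sum_sub_distrib, hw1, ZMod.natCast_eq_one_iff_odd.mpr hodd]
    simpa using W.add_mem hw (hle this)
  · rintro ⟨hodd, rfl⟩
    exact ⟨mt one_mem_evenWeight_iff.mp (Nat.not_even_iff_odd.mpr hodd),
      fun i => (one_sub_single_mem_evenWeight_iff i).mpr hodd⟩

end EvenWeight

section MaximalSubgroups

variable {G : Type*} [Group G]

theorem IsPGroup.card_quotient_eq_of_isCoatom {p : ℕ} [Fact p.Prime] [Finite G] (hG : IsPGroup p G)
    {M : Subgroup G} [M.Normal] (hM : IsCoatom M) : Nat.card (G ⧸ M) = p := by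
  have : Nontrivial (G ⧸ M) := QuotientGroup.nontrivial_iff.mpr hM.1
  obtain ⟨k, hk0, hk⟩ := (hG.to_quotient M).nontrivial_iff_card.mp this
  obtain ⟨q, hq⟩ := exists_prime_orderOf_dvd_card' p (hk ▸ dvd_pow_self p hk0.ne')
  obtain ⟨g, rfl⟩ := QuotientGroup.mk'_surjective M q
  have hg : g ∉ M := fun hg => by
    simp [(QuotientGroup.eq_one_iff g).mpr hg, (Fact.out : p.Prime).ne_one.symm] at hq
  -- the preimage of `⟨q⟩` strictly contains the maximal subgroup `M`, so `q` generates `G ⧸ M`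
  have hcomap : (zpowers (QuotientGroup.mk' M g)).comap (QuotientGroup.mk' M) = ⊤ := by
    refine hM.2 _ (SetLike.lt_iff_le_and_exists.mpr ⟨fun x hx => ?_, g, mem_zpowers _, hg⟩)
    simp [mem_comap, (QuotientGroup.eq_one_iff x).mpr hx]
  have htop : zpowers (QuotientGroup.mk' M g) = ⊤ := by
    rw [← map_comap_eq_self_of_surjective (QuotientGroup.mk'_surjective M) (zpowers _), hcomap,
      ← MonoidHom.range_eq_map, MonoidHom.range_eq_top.mpr (QuotientGroup.mk'_surjective M)]
  rw [← Subgroup.card_top, ← htop, Nat.card_zpowers, hq]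

theorem IsPGroup.exists_ker_eq_of_isCoatom {p : ℕ} [Fact p.Prime] [Finite G] (hG : IsPGroup p G)
    {M : Subgroup G} (hM : IsCoatom M) : ∃ χ : G →* Multiplicative (ZMod p), χ.ker = M := by
  have := hG.isNilpotent
  have : M.Normal :=
    NormalizerCondition.normal_of_coatom M Group.normalizerCondition_of_isNilpotent hM
  let e := mulEquivOfPrimeCardEq (hG.card_quotient_eq_of_isCoatom hM)
    (by simp : Nat.card (Multiplicative (ZMod p)) = p)
  exact ⟨e.toMonoidHom.comp (QuotientGroup.mk' M), by simp⟩

theorem isCoatom_ker_of_ne_one {H : Type*} [CommGroup H] [IsSimpleGroup H] (χ : G →* H) {g : G}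
    (hg : χ g ≠ 1) : IsCoatom χ.ker := by
  have hrange : χ.range = ⊤ := (IsSimpleOrder.eq_bot_or_eq_top χ.range).resolve_left fun h =>
    hg (by simpa [h] using (MonoidHom.mem_range (f := χ)).mpr ⟨g, rfl⟩)
  rw [← MonoidHom.comap_bot]
  exact isCoatom_comap_of_surjective (MonoidHom.range_eq_top.mp hrange)
    (isSimpleOrder_iff_isCoatom_bot.mp inferInstance)

def IsIrredundantCover {ι : Type*} (K : ι → Subgroup G) : Prop :=
  (∀ g, ∃ i, g ∈ K i) ∧ ∀ i, ∃ g, ∀ j, g ∈ K j ↔ j = i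

theorem IsCCover.isIrredundantCover {m : ℕ} {𝒞 : Finset (Subgroup G)} (h : IsCCover m 𝒞) :
    IsIrredundantCover fun M : 𝒞 => (M : Subgroup G) := by
  classical
  obtain ⟨-, -, hcov, hirr, -, -⟩ := h
  refine ⟨fun g => ?_, fun M => ?_⟩
  · obtain ⟨M, hM, hg⟩ := hcov g
    exact ⟨⟨M, hM⟩, hg⟩
  · obtain ⟨g, hg⟩ := hirr (𝒞.erase M) (Finset.erase_ssubset M.2)
    have hgM : ∀ N : 𝒞, g ∈ (N : Subgroup G) → N = M := fun N hgN => by_contra fun hN =>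
      hg N (Finset.mem_erase.mpr ⟨Subtype.coe_injective.ne hN, N.2⟩) hgN
    obtain ⟨M', hM', hgM'⟩ := hcov g
    refine ⟨g, fun N => ⟨hgM N, ?_⟩⟩
    rintro rfl
    rwa [← hgM ⟨M', hM'⟩ hgM']

end MaximalSubgroups

section CharMap

variable {G : Type*} [Group G] {ι : Type*} (χ : ι → G →* Multiplicative (ZMod 2))

def charMap : Additive G →+ (ι → ZMod 2) :=
  AddMonoidHom.pi fun i => MonoidHom.toAdditiveLeft (χ i)

variable {χ}

theorem charMap_apply_eq_zero_iff {x : Additive G} {i : ι} :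
    charMap χ x i = 0 ↔ x.toMul ∈ (χ i).ker := by
  simp [charMap, MonoidHom.mem_ker]

theorem charMap_apply_eq_one_iff {x : Additive G} {i : ι} :
    charMap χ x i = 1 ↔ x.toMul ∉ (χ i).ker := by
  rw [← charMap_apply_eq_zero_iff]
  generalize charMap χ x i = a
  revert a
  decide

theorem one_notMem_range_charMap_iff :
    1 ∉ (charMap χ).range ↔ ∀ g, ∃ i, g ∈ (χ i).ker := by
  simp only [AddMonoidHom.mem_range, funext_iff, Pi.one_apply, charMap_apply_eq_one_iff,
    not_exists, not_forall, not_not]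
  exact ⟨fun h g => h (Additive.ofMul g), fun h x => h x.toMul⟩

theorem one_sub_single_mem_range_charMap_iff [DecidableEq ι] (i : ι) :
    1 - Pi.single i 1 ∈ (charMap χ).range ↔ ∃ g, ∀ j, g ∈ (χ j).ker ↔ j = i := by
  have hcoord (x : Additive G) (j : ι) :
      charMap χ x j = (1 - Pi.single i 1 : ι → ZMod 2) j ↔ (x.toMul ∈ (χ j).ker ↔ j = i) := by
    by_cases hji : j = i
    · simp [hji, charMap_apply_eq_zero_iff]
    · simp [hji, charMap_apply_eq_one_iff]
  simp only [AddMonoidHom.mem_range, funext_iff, hcoord]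
  exact ⟨fun ⟨x, hx⟩ => ⟨x.toMul, hx⟩, fun ⟨g, hg⟩ => ⟨Additive.ofMul g, hg⟩⟩

theorem isIrredundantCover_ker_iff [Fintype ι] :
    IsIrredundantCover (fun i => (χ i).ker) ↔
      Odd (Fintype.card ι) ∧ (charMap χ).range = (evenWeight ι).toAddSubgroup := by
  classical
  have := one_notMem_and_one_sub_single_mem_iff ((charMap χ).range.toZModSubmodule 2)
  simp only [AddSubgroup.mem_toZModSubmodule, one_notMem_range_charMap_iff,
    one_sub_single_mem_range_charMap_iff] at this
  rw [IsIrredundantCover, this, ← (AddSubgroup.toZModSubmodule 2).injective.eq_iff,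
    Submodule.toAddSubgroup_toZModSubmodule]

theorem IsCCover.charMap_injective {m : ℕ} {𝒞 : Finset (Subgroup G)} (h : IsCCover m 𝒞)
    {χ : 𝒞 → G →* Multiplicative (ZMod 2)} (hχ : ∀ M, (χ M).ker = M) :
    Function.Injective (charMap χ) := by
  refine (injective_iff_map_eq_zero _).mpr fun x hx => ?_
  have hcore : x.toMul ∈ (𝒞.inf id).normalCore := fun b => by
    simp only [Finset.inf_eq_iInf, id, mem_iInf]
    intro M hM
    rw [show M = (χ ⟨M, hM⟩).ker from (hχ ⟨M, hM⟩).symm]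
    exact (χ _).normal_ker.conj_mem _ (charMap_apply_eq_zero_iff.mp (congrFun hx _)) b
  rw [h.2.2.2.2.2, mem_bot] at hcore
  exact congrArg Additive.ofMul hcore

theorem isCCover_image_ker [Fintype ι] [DecidableEq (Subgroup G)]
    (hχ : IsIrredundantCover fun i => (χ i).ker) (hinj : Function.Injective (charMap χ))
    (hι : 1 < Fintype.card ι) :
    IsCCover (Fintype.card ι) (Finset.univ.image fun i => (χ i).ker) := by
  obtain ⟨hcov, hsep⟩ := hχ
  choose w hw using hsep
  have hker_inj : Function.Injective fun i => (χ i).ker := fun i j hij =>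
    ((hw i j).mp (hij ▸ (hw i i).mpr rfl)).symm
  have hcoatom (i : ι) : IsCoatom (χ i).ker := by
    obtain ⟨j, hji⟩ := Fintype.exists_ne_of_one_lt_card hι i
    have : IsSimpleGroup (Multiplicative (ZMod 2)) := isSimpleGroup_of_prime_card (p := 2) (by simp)
    exact isCoatom_ker_of_ne_one (χ i) (g := w j) fun h => hji.symm ((hw j i).mp h)
  simp only [IsCCover, Finset.mem_image, Finset.mem_univ, true_and, forall_exists_index,
    forall_apply_eq_imp_iff]
  refine ⟨Finset.card_image_of_injective _ hker_inj, fun i => (hcoatom i).1, fun g => ?_,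
    fun 𝒟 h𝒟 => ?_, hcoatom, ?_⟩
  · obtain ⟨i, hi⟩ := hcov g
    exact ⟨_, ⟨i, rfl⟩, hi⟩
  · obtain ⟨_, hi, hi𝒟⟩ := Finset.exists_of_ssubset h𝒟
    obtain ⟨i, -, rfl⟩ := Finset.mem_image.mp hi
    refine ⟨w i, fun M hM hwM => hi𝒟 ?_⟩
    obtain ⟨j, -, rfl⟩ := Finset.mem_image.mp (h𝒟.1 hM)
    rwa [← (hw i j).mp hwM]
  · refine eq_bot_iff.mpr fun x hx => ?_
    have hx' := normalCore_le _ hx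
    simp only [Finset.inf_eq_iInf, id, mem_iInf, Finset.mem_image, Finset.mem_univ, true_and,
      forall_exists_index, forall_apply_eq_imp_iff] at hx'
    have : charMap χ (Additive.ofMul x) = 0 :=
      funext fun i => charMap_apply_eq_zero_iff.mpr (hx' i)
    exact mem_bot.mpr (congrArg Additive.toMul (hinj (this.trans (map_zero _).symm)))

theorem exists_charMap_iff_nonempty_addEquiv (W : AddSubgroup (ι → ZMod 2)) :
    (∃ χ : ι → G →* Multiplicative (ZMod 2),
        Function.Injective (charMap χ) ∧ (charMap χ).range = W) ↔
      Nonempty (Additive G ≃+ W) := by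
  refine ⟨fun ⟨χ, hinj, hrange⟩ => ⟨(AddMonoidHom.ofInjective hinj).trans
    (AddEquiv.addSubgroupCongr hrange)⟩, fun ⟨a⟩ => ?_⟩
  let Ψ : Additive G →+ (ι → ZMod 2) := W.subtype.comp a.toAddMonoidHom
  refine ⟨fun i => MonoidHom.toAdditiveLeft.symm ((Pi.evalAddMonoidHom _ i).comp Ψ), ?_⟩
  have hΨ : charMap (fun i => MonoidHom.toAdditiveLeft.symm
      ((Pi.evalAddMonoidHom _ i).comp Ψ)) = Ψ := rfl
  rw [hΨ]
  refine ⟨Subtype.val_injective.comp a.injective, ?_⟩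
  ext y
  exact ⟨fun ⟨x, hx⟩ => hx ▸ (a x).2, fun hy => ⟨a.symm ⟨y, hy⟩, by simp [Ψ]⟩⟩

theorem nonempty_addEquiv_evenWeight_iff [Fintype ι] [Nonempty ι] :
    Nonempty (Additive G ≃+ evenWeight ι) ↔
      Nonempty (G ≃* (Fin (Fintype.card ι - 1) → Multiplicative (ZMod 2))) := by
  let b : evenWeight ι ≃ₗ[ZMod 2] (Fin (Fintype.card ι - 1) → ZMod 2) :=
    LinearEquiv.ofFinrankEq _ _ (by simp [finrank_evenWeight])
  exact ⟨fun ⟨a⟩ => ⟨(AddEquiv.toMultiplicativeRight (a.trans b.toAddEquiv)).trans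
      (MulEquiv.funMultiplicative _ _)⟩,
    fun ⟨e⟩ => ⟨(AddEquiv.toMultiplicativeRight.symm
      (e.trans (MulEquiv.funMultiplicative _ _).symm)).trans b.symm.toAddEquiv⟩⟩

end CharMap

theorem statement_1 {G : Type*} [Group G] [Finite G] (h2 : IsPGroup 2 G)
    (n : ℕ) (hn : 0 < n) :
    (∃ 𝒞 : Finset (Subgroup G), IsCCover (n + 1) 𝒞) ↔
      Even n ∧ Nonempty (G ≃* (Fin n → Multiplicative (ZMod 2))) := by
  classical
  constructor
  · rintro ⟨𝒞, h𝒞⟩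
    choose χ hχ using fun M : 𝒞 => h2.exists_ker_eq_of_isCoatom (h𝒞.2.2.2.2.1 M M.2)
    have hcard : Fintype.card 𝒞 = n + 1 := by simpa using h𝒞.1
    have : Nonempty 𝒞 := Fintype.card_pos_iff.mp (by omega)
    obtain ⟨hodd, hrange⟩ := isIrredundantCover_ker_iff.mp
      (show IsIrredundantCover fun M => (χ M).ker from funext hχ ▸ h𝒞.isIrredundantCover)
    obtain ⟨a⟩ := (exists_charMap_iff_nonempty_addEquiv _).mp ⟨χ, h𝒞.charMap_injective hχ, hrange⟩
    have he := nonempty_addEquiv_evenWeight_iff.mp ⟨a⟩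
    rw [hcard, Nat.add_sub_cancel] at he
    rw [hcard, Nat.odd_add_one, Nat.not_odd_iff_even] at hodd
    exact ⟨hodd, he⟩
  · rintro ⟨hev, ⟨e⟩⟩
    obtain ⟨a⟩ := (nonempty_addEquiv_evenWeight_iff (ι := Fin (n + 1))).mpr
      (by rw [Fintype.card_fin, Nat.add_sub_cancel]; exact ⟨e⟩)
    obtain ⟨χ, hinj, hrange⟩ :=
      (exists_charMap_iff_nonempty_addEquiv (evenWeight _).toAddSubgroup).mpr ⟨a⟩
    have hχ := isIrredundantCover_ker_iff.mpr ⟨by simpa using hev.add_one, hrange⟩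
    exact ⟨_, by simpa using isCCover_image_ker hχ hinj (by simpa using hn)⟩
end

section
/- There exists a nontrivial minimal blocking set of size 7 in PG(3,3). -/
/-!
The seven points block every plane of `PG(3,3)`, and each of them has a tangent plane meeting
the set in that point alone, so the set is a minimal blocking set. In `PG(3,q)` a line meets
every plane, so it is itself a blocking set; a minimal blocking set containing a line is
therefore that line. Our set spans a subspace of dimension at least `3`, so it is not a line.
-/

open Module Projectivization

section Subspace

variable {K V : Type*} [Field K] [AddCommGroup V] [Module K V]

theorem Projectivization.rep_mem_iff {v : V} (hv : v ≠ 0) (W : Submodule K V) :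
    (mk K v hv).rep ∈ W ↔ v ∈ W := by
  obtain ⟨a, ha⟩ := exists_smul_eq_mk_rep K v hv
  rw [← ha, Units.smul_def, W.smul_mem_iff a.ne_zero]

theorem Module.Dual.exists_ne_zero_eq_ker [FiniteDimensional K V] {W : Submodule K V}
    (hW : finrank K W + 1 = finrank K V) :
    ∃ f : Dual K V, f ≠ 0 ∧ W = LinearMap.ker f := by
  have hlt : W < ⊤ := lt_top_iff_ne_top.2 fun h => by
    rw [h, finrank_top] at hW; omega
  obtain ⟨f, hf, hWf⟩ := W.exists_dual_map_eq_bot_of_lt_top hlt inferInstance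
  refine ⟨f, hf, Submodule.eq_of_le_of_finrank_le (LinearMap.le_ker_iff_map.2 hWf) ?_⟩
  have := f.finrank_ker_add_one_of_ne_zero hf
  omega

end Subspace

section Hyperplane

variable {K : Type*} [Field K] {n : ℕ}

theorem exists_ne_zero_eq_ker_dotProductEquiv {W : Submodule K (Fin (n + 1) → K)}
    (hW : finrank K W = n) :
    ∃ c ≠ 0, W = LinearMap.ker (dotProductEquiv K (Fin (n + 1)) c) := by
  obtain ⟨f, hf, rfl⟩ := Dual.exists_ne_zero_eq_ker (W := W) (by simpa using hW)
  refine ⟨(dotProductEquiv K _).symm f, ?_, by simp⟩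
  simpa using hf

theorem finrank_ker_dotProductEquiv {c : Fin (n + 1) → K} (hc : c ≠ 0) :
    finrank K (LinearMap.ker (dotProductEquiv K (Fin (n + 1)) c)) = n := by
  have := (dotProductEquiv K (Fin (n + 1)) c).finrank_ker_add_one_of_ne_zero (by simpa using hc)
  simpa using this

end Hyperplane

section BlockingSet

variable {K : Type*} [Field K] {n : ℕ}

theorem isBlockingSet_setOf_rep_mem {L : Submodule K (Fin (n + 1) → K)}
    (hL : 2 ≤ finrank K L) :
    IsBlockingSet {x : Projectivization K (Fin (n + 1) → K) | x.rep ∈ L} := by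
  intro W hW
  have hdim := Submodule.finrank_sup_add_finrank_inf_eq L W
  have hsup : finrank K ↥(L ⊔ W) ≤ n + 1 := (Submodule.finrank_le _).trans (by simp)
  obtain ⟨v, hv, hv0⟩ := Submodule.exists_mem_ne_zero_of_ne_bot
    (Submodule.one_le_finrank_iff.1 (by omega) : L ⊓ W ≠ ⊥)
  exact ⟨mk K v hv0, (rep_mem_iff hv0 L).2 hv.1, (rep_mem_iff hv0 W).2 hv.2⟩

theorem IsMinimalBlockingSet.finrank_projSpan_le {B : Set (Projectivization K (Fin (n + 1) → K))}
    (hB : IsMinimalBlockingSet B) {L : Submodule K (Fin (n + 1) → K)} (hL : 2 ≤ finrank K L)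
    (hLB : {x | x.rep ∈ L} ⊆ B) : finrank K (projSpan B) ≤ finrank K L := by
  have hBL : B ⊆ {x | x.rep ∈ L} := by
    by_contra h
    exact hB.2 _ (hLB.ssubset_of_not_superset h) (isBlockingSet_setOf_rep_mem hL)
  exact Submodule.finrank_mono (Submodule.span_le.2 (Set.image_subset_iff.2 hBL))

theorem isMinimalBlockingSet_of_forall_tangent {B : Set (Projectivization K (Fin (n + 1) → K))}
    (hB : IsBlockingSet B)
    (htan : ∀ p ∈ B, ∃ W : Submodule K (Fin (n + 1) → K),
      finrank K W = n ∧ ∀ q ∈ B, q.rep ∈ W → q = p) :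
    IsMinimalBlockingSet B := by
  refine ⟨hB, fun B' hB'B hB' => ?_⟩
  obtain ⟨p, hpB, hpB'⟩ := Set.exists_of_ssubset hB'B
  obtain ⟨W, hW, hWp⟩ := htan p hpB
  obtain ⟨q, hqB', hqW⟩ := hB' W hW
  exact hpB' (hWp q (hB'B.subset hqB') hqW ▸ hqB')

end BlockingSet

section PointFamily

variable {K ι : Type*} [Field K] {n : ℕ} {v : ι → Fin (n + 1) → K} (hv : ∀ i, v i ≠ 0)

theorem isBlockingSet_range_mk (hblock : ∀ c ≠ 0, ∃ i, c ⬝ᵥ v i = 0) :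
    IsBlockingSet (Set.range fun i => mk K (v i) (hv i)) := by
  intro W hW
  obtain ⟨c, hc, rfl⟩ := exists_ne_zero_eq_ker_dotProductEquiv hW
  obtain ⟨i, hi⟩ := hblock c hc
  exact ⟨_, Set.mem_range_self i, (rep_mem_iff (hv i) _).2 (by simpa using hi)⟩

variable {t : ι → Fin (n + 1) → K} (ht : ∀ i, t i ≠ 0)
  (htan : ∀ i j, t i ⬝ᵥ v j = 0 ↔ j = i)
include htan

theorem injective_mk_of_dotProduct_eq_zero_iff :
    Function.Injective fun i => mk K (v i) (hv i) := by
  intro i j hij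
  obtain ⟨a, ha⟩ := (mk_eq_mk_iff' K _ _ (hv i) (hv j)).1 hij
  rw [← htan j i, ← ha, dotProduct_smul, (htan j j).2 rfl, smul_zero]

include ht in
theorem isMinimalBlockingSet_range_mk (hblock : ∀ c ≠ 0, ∃ i, c ⬝ᵥ v i = 0) :
    IsMinimalBlockingSet (Set.range fun i => mk K (v i) (hv i)) := by
  refine isMinimalBlockingSet_of_forall_tangent (isBlockingSet_range_mk hv hblock) ?_
  rintro _ ⟨i, rfl⟩
  refine ⟨_, finrank_ker_dotProductEquiv (ht i), ?_⟩
  rintro _ ⟨j, rfl⟩ hj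
  rw [(htan i j).1 (by simpa [rep_mem_iff] using hj)]

end PointFamily

theorem mem_projSpan_of_mk_mem {K : Type*} [Field K] {n : ℕ}
    {B : Set (Projectivization K (Fin (n + 1) → K))} {v : Fin (n + 1) → K} (hv : v ≠ 0)
    (h : mk K v hv ∈ B) : v ∈ projSpan B :=
  (rep_mem_iff hv _).1 (Submodule.subset_span (Set.mem_image_of_mem _ h))

def sevenPoints : Fin 7 → Fin 4 → ZMod 3 :=
  ![![1,2,2,2], ![1,2,0,1], ![0,0,1,1], ![1,1,0,2], ![0,1,2,2], ![1,1,0,0], ![0,1,0,2]]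

def sevenTangents : Fin 7 → Fin 4 → ZMod 3 :=
  ![![0,1,0,2], ![1,0,0,2], ![0,1,0,0], ![1,0,1,1], ![0,1,1,0], ![0,0,0,1], ![1,0,2,0]]

theorem sevenPoints_ne_zero : ∀ i, sevenPoints i ≠ 0 := by decide

theorem sevenTangents_ne_zero : ∀ i, sevenTangents i ≠ 0 := by decide

theorem sevenTangents_dotProduct_eq_zero_iff :
    ∀ i j, sevenTangents i ⬝ᵥ sevenPoints j = 0 ↔ j = i := by decide

theorem exists_dotProduct_sevenPoints_eq_zero :
    ∀ c : Fin 4 → ZMod 3, c ≠ 0 → ∃ i, c ⬝ᵥ sevenPoints i = 0 := by decide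

theorem linearIndependent_sevenPoints_012 :
    LinearIndependent (ZMod 3) (sevenPoints ∘ ![0, 1, 2]) := by
  rw [Fintype.linearIndependent_iff]
  decide

abbrev sevenPointSet : Set (Projectivization (ZMod 3) (Fin 4 → ZMod 3)) :=
  Set.range fun i => mk (ZMod 3) (sevenPoints i) (sevenPoints_ne_zero i)

theorem three_le_finrank_projSpan_sevenPointSet :
    3 ≤ finrank (ZMod 3) (projSpan sevenPointSet) := by
  have hsub : Set.range (sevenPoints ∘ ![0, 1, 2]) ⊆ projSpan sevenPointSet :=
    (Set.range_comp_subset_range _ _).trans <| Set.range_subset_iff.2 fun i =>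
      mem_projSpan_of_mk_mem (sevenPoints_ne_zero i) (Set.mem_range_self i)
  have := Submodule.finrank_mono (Submodule.span_le.2 hsub)
  rwa [finrank_span_eq_card linearIndependent_sevenPoints_012, Fintype.card_fin] at this

theorem statement_5 :
    ∃ B : Set (Projectivization (ZMod 3) (Fin (3 + 1) → ZMod 3)),
      B.ncard = 7 ∧ IsMinimalBlockingSet B ∧
      -- nontrivial: `B` contains no line of `PG(3,3)`
      ¬ ∃ W : Submodule (ZMod 3) (Fin (3 + 1) → ZMod 3),
          Module.finrank (ZMod 3) W = 2 ∧
          {x : Projectivization (ZMod 3) (Fin (3 + 1) → ZMod 3) | x.rep ∈ W} ⊆ B := by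
  have hmin : IsMinimalBlockingSet sevenPointSet :=
    isMinimalBlockingSet_range_mk sevenPoints_ne_zero sevenTangents_ne_zero
      sevenTangents_dotProduct_eq_zero_iff exists_dotProduct_sevenPoints_eq_zero
  refine ⟨sevenPointSet, ?_, hmin, ?_⟩
  · rw [Set.ncard_range_of_injective (injective_mk_of_dotProduct_eq_zero_iff sevenPoints_ne_zero
      sevenTangents_dotProduct_eq_zero_iff), Nat.card_fin]
  · rintro ⟨W, hW, hWB⟩
    have hle := hmin.finrank_projSpan_le hW.ge hWB
    have hspan := three_le_finrank_projSpan_sevenPointSet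
    omega
end

section
/- There exists a nontrivial minimal blocking set of size 9 in PG(4,3). -/
open Matrix Module

theorem Projectivization.mk_rep_mem_iff {K V : Type*} [DivisionRing K] [AddCommGroup V]
    [Module K V] (W : Submodule K V) {v : V} (hv : v ≠ 0) :
    (Projectivization.mk K v hv).rep ∈ W ↔ v ∈ W := by
  obtain ⟨a, ha⟩ := Projectivization.exists_smul_eq_mk_rep K v hv
  rw [← ha, Submodule.smul_mem_iff']

section Hyperplane

variable {K : Type*} [Field K] {n : ℕ}

def coordHyperplane (a : Fin (n + 1) → K) : Submodule K (Fin (n + 1) → K) :=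
  LinearMap.ker (dotProductEquiv K (Fin (n + 1)) a)

theorem mem_coordHyperplane {a v : Fin (n + 1) → K} : v ∈ coordHyperplane a ↔ a ⬝ᵥ v = 0 :=
  Iff.rfl

theorem finrank_coordHyperplane {a : Fin (n + 1) → K} (ha : a ≠ 0) :
    finrank K (coordHyperplane a) = n := by
  have h := Module.Dual.finrank_ker_add_one_of_ne_zero
    ((dotProductEquiv K (Fin (n + 1))).map_ne_zero_iff.mpr ha)
  rw [Module.finrank_fin_fun] at h
  exact Nat.add_right_cancel h

theorem exists_coordHyperplane_eq {W : Submodule K (Fin (n + 1) → K)} (hW : finrank K W = n) :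
    ∃ a ≠ 0, coordHyperplane a = W := by
  have hlt : W < ⊤ := Submodule.lt_top_of_finrank_lt_finrank (by simp [hW])
  obtain ⟨f, hf, hWf⟩ := Submodule.exists_dual_map_eq_bot_of_lt_top hlt inferInstance
  obtain ⟨a, rfl⟩ := (dotProductEquiv K (Fin (n + 1))).surjective f
  have ha : a ≠ 0 := by rintro rfl; exact hf (map_zero _)
  exact ⟨a, ha, (Submodule.eq_of_le_of_finrank_eq (LinearMap.le_ker_iff_map.mpr hWf)
    (hW.trans (finrank_coordHyperplane ha).symm)).symm⟩

theorem isBlockingSet_iff {B : Set (Projectivization K (Fin (n + 1) → K))} :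
    IsBlockingSet B ↔ ∀ a ≠ 0, ∃ x ∈ B, a ⬝ᵥ x.rep = 0 := by
  refine ⟨fun hB a ha => hB _ (finrank_coordHyperplane ha), fun hB W hW => ?_⟩
  obtain ⟨a, ha, rfl⟩ := exists_coordHyperplane_eq hW
  exact hB a ha

end Hyperplane

section BlockingSet

variable {K : Type*} [Field K] {n : ℕ} {B : Set (Projectivization K (Fin (n + 1) → K))}

theorem IsBlockingSet.isMinimalBlockingSet (hB : IsBlockingSet B)
    (htangent : ∀ x ∈ B, ∃ W : Submodule K (Fin (n + 1) → K), finrank K W = n ∧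
      ∀ y ∈ B, y.rep ∈ W → y = x) :
    IsMinimalBlockingSet B := by
  refine ⟨hB, fun B' hB' hB'_blocking => ?_⟩
  obtain ⟨x, hxB, hxB'⟩ := Set.exists_of_ssubset hB'
  obtain ⟨W, hW, hWx⟩ := htangent x hxB
  obtain ⟨y, hyB', hyW⟩ := hB'_blocking W hW
  exact hxB' (hWx y (hB'.subset hyB') hyW ▸ hyB')

theorem isBlockingSet_line {W : Submodule K (Fin (n + 1) → K)} (hW : finrank K W = 2) :
    IsBlockingSet {x : Projectivization K (Fin (n + 1) → K) | x.rep ∈ W} := by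
  intro H hH
  -- `dim (W ⊓ H) ≥ 2 + n - (n + 1) = 1`
  have hdim := Submodule.finrank_sup_add_finrank_inf_eq W H
  have hsup : finrank K ↥(W ⊔ H) ≤ n + 1 := by
    simpa using Submodule.finrank_le (W ⊔ H)
  obtain ⟨v, hv, hv0⟩ := Submodule.exists_mem_ne_zero_of_ne_bot
    (Submodule.one_le_finrank_iff.mp (by omega) : W ⊓ H ≠ ⊥)
  exact ⟨.mk K v hv0, (Projectivization.mk_rep_mem_iff W hv0).mpr hv.1,
    (Projectivization.mk_rep_mem_iff H hv0).mpr hv.2⟩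

theorem IsMinimalBlockingSet.not_exists_line_subset (hB : IsMinimalBlockingSet B)
    (hspan : 2 < finrank K (projSpan B)) :
    ¬ ∃ W : Submodule K (Fin (n + 1) → K), finrank K W = 2 ∧
      {x : Projectivization K (Fin (n + 1) → K) | x.rep ∈ W} ⊆ B := by
  rintro ⟨W, hW, hWB⟩
  have hBW : B = {x | x.rep ∈ W} :=
    (hWB.eq_or_ssubset.resolve_right fun h => hB.2 _ h (isBlockingSet_line hW)).symm
  have hle : projSpan B ≤ W := by
    rw [projSpan, Submodule.span_le, hBW]
    rintro _ ⟨x, hx, rfl⟩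
    exact hx
  have := Submodule.finrank_mono hle
  omega

end BlockingSet

namespace PG43

def vec : Fin 9 → Fin 5 → ZMod 3 :=
  ![![1,1,1,0,0], ![0,0,0,1,2], ![1,2,0,2,2], ![0,1,1,2,1], ![1,1,1,1,2],
    ![0,1,1,0,0], ![1,1,0,1,0], ![1,1,0,2,1], ![0,1,1,0,1]]

def tangent : Fin 9 → Fin 5 → ZMod 3 :=
  ![![1,1,1,0,2], ![0,1,0,0,0], ![1,0,1,0,1], ![0,0,1,1,0], ![0,0,1,2,0],
    ![1,1,2,0,2], ![1,0,1,2,0], ![1,1,0,0,1], ![1,0,1,1,2]]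

theorem vec_ne_zero : ∀ i, vec i ≠ 0 := by decide

theorem tangent_ne_zero : ∀ i, tangent i ≠ 0 := by decide

set_option maxRecDepth 8000 in
theorem exists_dotProduct_vec_eq_zero : ∀ a ≠ 0, ∃ i, a ⬝ᵥ vec i = 0 := by decide

theorem tangent_dotProduct_vec_eq_zero_iff : ∀ i k, tangent i ⬝ᵥ vec k = 0 ↔ k = i := by decide

theorem linearIndependent_vec_castLE :
    LinearIndependent (ZMod 3) (vec ∘ Fin.castLE (by norm_num : 3 ≤ 9)) :=
  Fintype.linearIndependent_iff.mpr (by decide)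

noncomputable def point (i : Fin 9) : Projectivization (ZMod 3) (Fin 5 → ZMod 3) :=
  .mk (ZMod 3) (vec i) (vec_ne_zero i)

noncomputable def blockingSet : Set (Projectivization (ZMod 3) (Fin 5 → ZMod 3)) :=
  Set.range point

theorem point_rep_mem_coordHyperplane_tangent_iff {i k : Fin 9} :
    (point k).rep ∈ coordHyperplane (tangent i) ↔ k = i := by
  rw [point, Projectivization.mk_rep_mem_iff, mem_coordHyperplane,
    tangent_dotProduct_vec_eq_zero_iff]

theorem point_injective : Function.Injective point := by
  intro i k h
  have hi : (point i).rep ∈ coordHyperplane (tangent i) :=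
    point_rep_mem_coordHyperplane_tangent_iff.mpr rfl
  rw [h] at hi
  exact (point_rep_mem_coordHyperplane_tangent_iff.mp hi).symm

theorem ncard_blockingSet : blockingSet.ncard = 9 := by
  rw [blockingSet, ← Set.image_univ, Set.ncard_image_of_injective _ point_injective,
    Set.ncard_univ, Nat.card_eq_fintype_card, Fintype.card_fin]

theorem isBlockingSet_blockingSet : IsBlockingSet blockingSet := by
  refine isBlockingSet_iff.mpr fun a ha => ?_
  obtain ⟨i, hi⟩ := exists_dotProduct_vec_eq_zero a ha
  exact ⟨point i, Set.mem_range_self i,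
    (Projectivization.mk_rep_mem_iff (coordHyperplane a) (vec_ne_zero i)).mpr hi⟩

theorem isMinimalBlockingSet_blockingSet : IsMinimalBlockingSet blockingSet := by
  refine isBlockingSet_blockingSet.isMinimalBlockingSet ?_
  rintro _ ⟨i, rfl⟩
  refine ⟨coordHyperplane (tangent i), finrank_coordHyperplane (tangent_ne_zero i), ?_⟩
  rintro _ ⟨k, rfl⟩ hk
  rw [point_rep_mem_coordHyperplane_tangent_iff.mp hk]

theorem two_lt_finrank_projSpan_blockingSet :
    2 < finrank (ZMod 3) (projSpan blockingSet) := by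
  have hvec : Set.range (vec ∘ Fin.castLE (by norm_num : 3 ≤ 9)) ⊆ projSpan blockingSet := by
    rintro _ ⟨i, rfl⟩
    exact (Projectivization.mk_rep_mem_iff _ (vec_ne_zero _)).mp
      (Submodule.subset_span ⟨point _, Set.mem_range_self _, rfl⟩)
  calc 2 < Fintype.card (Fin 3) := by decide
    _ = finrank (ZMod 3) (Submodule.span (ZMod 3) (Set.range (vec ∘ Fin.castLE _))) :=
      (finrank_span_eq_card linearIndependent_vec_castLE).symm
    _ ≤ _ := Submodule.finrank_mono (Submodule.span_le.mpr hvec)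

end PG43

theorem statement_7 :
    ∃ B : Set (Projectivization (ZMod 3) (Fin (4 + 1) → ZMod 3)),
      B.ncard = 9 ∧ IsMinimalBlockingSet B ∧
      -- nontrivial: `B` contains no line of `PG(4,3)`
      ¬ ∃ W : Submodule (ZMod 3) (Fin (4 + 1) → ZMod 3),
          Module.finrank (ZMod 3) W = 2 ∧
          {x : Projectivization (ZMod 3) (Fin (4 + 1) → ZMod 3) | x.rep ∈ W} ⊆ B :=
  ⟨PG43.blockingSet, PG43.ncard_blockingSet, PG43.isMinimalBlockingSet_blockingSet,
    PG43.isMinimalBlockingSet_blockingSet.not_exists_line_subset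
      PG43.two_lt_finrank_projSpan_blockingSet⟩
end

section
/- Let p be a prime number and let n be a positive integer. A finite p-group G admits a 𝔠_{n+1}-cover if and only if there exists a positive integer m such that G is isomorphic to (C_p)^{m+1} and PG(m,p) contains a minimal blocking set B with d(B) = m and |B| = n+1. -/
/-!
In a finite `p`-group every maximal subgroup is normal of index `p`, so all commutators and
`p`-th powers lie in every member of a `𝔠`-cover. The commutator subgroup is normal, hence lies
in the (trivial) core of the intersection, so `G` is abelian; then the core is the intersection
itself and `G` has exponent `p`. Thus `G ≅ 𝔽_p^(m+1)`, subgroups are subspaces, and a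
`𝔠_(n+1)`-cover is an irredundant cover of `𝔽_p^(m+1)` by `n + 1` hyperplanes with trivial
intersection.

A correlation of `PG(m, p)`, i.e. an inclusion-reversing bijection `δ` of the subspace lattice
(one exists by linear duality), exchanges points and hyperplanes. A point `x` lies in a hyperplane
`W` iff the point `δ W` lies in the hyperplane `δ x`, so a point set `B` is blocking iff the
hyperplanes `δ '' B` cover the space, `B` is minimal iff this cover is irredundant, and `B` spans
the space iff these hyperplanes meet in `0`.
-/

open Module
open scoped LinearAlgebra.Projectivization

theorem Set.forall_ssubset_image_iff {α β : Type*} {f : α → β} (hf : Function.Injective f)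
    {s : Set α} {P : Set β → Prop} :
    (∀ t ⊂ f '' s, P t) ↔ ∀ u ⊂ s, P (f '' u) := by
  refine ⟨fun h u hu => h _ (hf.image_strictMono hu), fun h t ht => ?_⟩
  obtain ⟨u, hus, rfl⟩ := Set.subset_image_iff.1 ht.subset
  exact h u (ssubset_of_subset_of_ne hus (by rintro rfl; exact ht.ne rfl))

section Cover

variable {S T α β : Type*} [SetLike S α] [SetLike T β]

def IsCover (𝒞 : Set S) : Prop := ∀ a : α, ∃ s ∈ 𝒞, a ∈ s

structure IsIrredundantCoatomCover [CompleteLattice S] (𝒞 : Set S) : Prop where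
  isCover : IsCover 𝒞
  irredundant : ∀ 𝒟 ⊂ 𝒞, ¬ IsCover 𝒟
  isCoatom : ∀ s ∈ 𝒞, IsCoatom s
  sInf_eq_bot : sInf 𝒞 = ⊥

theorem isCover_image_iff (φ : S → T) (f : α ≃ β) (hf : ∀ a s, f a ∈ φ s ↔ a ∈ s)
    {𝒞 : Set S} : IsCover (φ '' 𝒞) ↔ IsCover 𝒞 := by
  simp only [IsCover, Set.exists_mem_image, ← hf]
  exact f.forall_congr_right.symm

theorem isIrredundantCoatomCover_image_iff [CompleteLattice S] [CompleteLattice T]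
    (φ : S ≃o T) (f : α ≃ β) (hf : ∀ a s, f a ∈ φ s ↔ a ∈ s) {𝒞 : Set S} :
    IsIrredundantCoatomCover (φ '' 𝒞) ↔ IsIrredundantCoatomCover 𝒞 := by
  have hcover : ∀ 𝒟 : Set S, IsCover (φ '' 𝒟) ↔ IsCover 𝒟 := fun _ => isCover_image_iff φ f hf
  have hirr : (∀ 𝒟 ⊂ φ '' 𝒞, ¬ IsCover 𝒟) ↔ ∀ 𝒟 ⊂ 𝒞, ¬ IsCover 𝒟 := by
    simp only [Set.forall_ssubset_image_iff φ.injective, hcover]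
  have hcoatom : (∀ t ∈ φ '' 𝒞, IsCoatom t) ↔ ∀ s ∈ 𝒞, IsCoatom s := by
    simp only [Set.forall_mem_image, φ.isCoatom_iff]
  have hinf : sInf (φ '' 𝒞) = ⊥ ↔ sInf 𝒞 = ⊥ := by
    rw [← map_sInf, map_eq_bot_iff]
  exact ⟨fun ⟨h₁, h₂, h₃, h₄⟩ => ⟨(hcover 𝒞).1 h₁, hirr.1 h₂, hcoatom.1 h₃, hinf.1 h₄⟩,
    fun ⟨h₁, h₂, h₃, h₄⟩ => ⟨(hcover 𝒞).2 h₁, hirr.2 h₂, hcoatom.2 h₃, hinf.2 h₄⟩⟩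

theorem exists_isIrredundantCoatomCover_iff [CompleteLattice S] [CompleteLattice T]
    (φ : S ≃o T) (f : α ≃ β) (hf : ∀ a s, f a ∈ φ s ↔ a ∈ s) (N : ℕ) :
    (∃ 𝒞 : Set S, 𝒞.ncard = N ∧ IsIrredundantCoatomCover 𝒞) ↔
      ∃ 𝒞 : Set T, 𝒞.ncard = N ∧ IsIrredundantCoatomCover 𝒞 := by
  refine ⟨fun ⟨𝒞, hN, h𝒞⟩ => ⟨φ '' 𝒞, ?_, (isIrredundantCoatomCover_image_iff φ f hf).2 h𝒞⟩,
    fun ⟨𝒞, hN, h𝒞⟩ => ⟨φ.symm '' 𝒞, ?_, ?_⟩⟩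
  · rwa [Set.ncard_image_of_injective _ φ.injective]
  · rwa [Set.ncard_image_of_injective _ φ.symm.injective]
  · rw [← isIrredundantCoatomCover_image_iff φ f hf, φ.image_symm_image]
    exact h𝒞

end Cover

section Group

variable {G : Type*} [Group G]

theorem Subgroup.normalCore_eq_self_of_commute (hcomm : ∀ a b : G, a * b = b * a)
    (H : Subgroup G) : H.normalCore = H :=
  have : H.Normal := ⟨fun n hn g => by rwa [hcomm g n, mul_inv_cancel_right]⟩
  H.normalCore_eq_self

theorem isCCover_iff_of_commute (hcomm : ∀ a b : G, a * b = b * a) {N : ℕ}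
    {𝒞 : Finset (Subgroup G)} :
    IsCCover N 𝒞 ↔ 𝒞.card = N ∧ IsIrredundantCoatomCover (𝒞 : Set (Subgroup G)) := by
  have hirr : (∀ 𝒟 : Finset (Subgroup G), 𝒟 ⊂ 𝒞 → ∃ g : G, ∀ M ∈ 𝒟, g ∉ M) ↔
      ∀ 𝒟 ⊂ (𝒞 : Set (Subgroup G)), ¬ IsCover 𝒟 := by
    simp only [IsCover, not_forall, not_exists, not_and]
    refine ⟨fun h 𝒟 h𝒟 => ?_, fun h 𝒟 h𝒟 => h 𝒟 (Finset.coe_ssubset.2 h𝒟)⟩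
    obtain ⟨𝒟, rfl⟩ := (𝒞.finite_toSet.subset h𝒟.subset).exists_finset_coe
    exact h 𝒟 (Finset.coe_ssubset.1 h𝒟)
  rw [IsCCover, Subgroup.normalCore_eq_self_of_commute hcomm, Finset.inf_id_eq_sInf, hirr]
  exact ⟨fun ⟨h₁, _, h₃, h₄, h₅, h₆⟩ => ⟨h₁, h₃, h₄, h₅, h₆⟩,
    fun ⟨h₁, h₃, h₄, h₅, h₆⟩ => ⟨h₁, fun M hM => (h₅ M hM).1, h₃, h₄, h₅, h₆⟩⟩

theorem exists_isCCover_iff_of_commute (hcomm : ∀ a b : G, a * b = b * a) {N : ℕ}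
    (hN : N ≠ 0) :
    (∃ 𝒞 : Finset (Subgroup G), IsCCover N 𝒞) ↔
      ∃ 𝒞 : Set (Subgroup G), 𝒞.ncard = N ∧ IsIrredundantCoatomCover 𝒞 := by
  simp only [isCCover_iff_of_commute hcomm]
  refine ⟨fun ⟨𝒞, h𝒞⟩ => ⟨𝒞, by rw [Set.ncard_coe_finset, h𝒞.1], h𝒞.2⟩, ?_⟩
  rintro ⟨𝒞, rfl, h𝒞⟩
  obtain ⟨𝒞, rfl⟩ := (Set.finite_of_ncard_ne_zero hN).exists_finset_coe
  exact ⟨𝒞, (Set.ncard_coe_finset 𝒞).symm, h𝒞⟩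

end Group

section PGroup

variable {G : Type*} [Group G]

theorem QuotientGroup.isSimpleGroup_of_isCoatom {M : Subgroup G} [M.Normal] (hM : IsCoatom M) :
    IsSimpleGroup (G ⧸ M) := by
  have : IsSimpleOrder (Subgroup (G ⧸ M)) :=
    (show Subgroup (G ⧸ M) ≃o Set.Ici M from QuotientGroup.comapMk'OrderIso M).isSimpleOrder_iff.2
      (Set.isSimpleOrder_Ici_iff_isCoatom.2 hM)
  have : Nontrivial (G ⧸ M) := Subgroup.nontrivial_iff.1 inferInstance
  exact ⟨fun H _ => IsSimpleOrder.eq_bot_or_eq_top H⟩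

variable {p : ℕ} [Fact p.Prime] [Finite G] (hG : IsPGroup p G) {M : Subgroup G} (hM : IsCoatom M)
include hG hM

theorem IsPGroup.normal_of_isCoatom : M.Normal :=
  have := hG.isNilpotent
  Subgroup.NormalizerCondition.normal_of_coatom M Group.normalizerCondition_of_isNilpotent hM

theorem IsPGroup.commutator_le_of_isCoatom : commutator G ≤ M := by
  have := hG.normal_of_isCoatom hM
  have := QuotientGroup.isSimpleGroup_of_isCoatom hM
  have := (hG.to_quotient M).isNilpotent
  -- a simple nilpotent group is abelian
  simpa using Abelianization.commutator_subset_ker (QuotientGroup.mk' M)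

theorem IsPGroup.index_eq_of_isCoatom : M.index = p := by
  have := hG.normal_of_isCoatom hM
  have := QuotientGroup.isSimpleGroup_of_isCoatom hM
  have := (hG.to_quotient M).isNilpotent
  have hprime : (Nat.card (G ⧸ M)).Prime := IsSimpleGroup.prime_card
  rw [Subgroup.index_eq_card]
  exact ((Nat.prime_dvd_prime_iff_eq Fact.out hprime).1
    (((hG.to_quotient M).card_eq_or_dvd).resolve_left hprime.ne_one)).symm

theorem IsPGroup.pow_mem_of_isCoatom (g : G) : g ^ p ∈ M := by
  have := hG.normal_of_isCoatom hM
  simpa [hG.index_eq_of_isCoatom hM] using M.pow_index_mem g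

end PGroup

theorem Module.exists_linearEquiv_fin_succ {K M : Type*} [DivisionRing K] [AddCommGroup M]
    [Module K M] [Module.Finite K M] [Nontrivial M] :
    ∃ m, Nonempty (M ≃ₗ[K] (Fin (m + 1) → K)) := by
  obtain ⟨m, hm⟩ := Nat.exists_eq_succ_of_ne_zero (Module.finrank_pos (R := K) (M := M)).ne'
  exact ⟨m, ⟨(Module.finBasisOfFinrankEq K M hm).equivFun⟩⟩

section ElementaryAbelian

variable {G : Type*} [Group G]

theorem exists_isCCover_iff_of_mulEquiv {p : ℕ} {V : Type*} [AddCommGroup V] [Module (ZMod p) V]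
    (e : G ≃* Multiplicative V) {N : ℕ} (hN : N ≠ 0) :
    (∃ 𝒞 : Finset (Subgroup G), IsCCover N 𝒞) ↔
      ∃ 𝒞 : Set (Submodule (ZMod p) V), 𝒞.ncard = N ∧ IsIrredundantCoatomCover 𝒞 := by
  have hcomm : ∀ a b : G, a * b = b * a := fun a b => e.injective (by simp [mul_comm])
  rw [exists_isCCover_iff_of_commute hcomm hN]
  refine exists_isIrredundantCoatomCover_iff
    (e.mapSubgroup.trans (Subgroup.toAddSubgroup'.trans (AddSubgroup.toZModSubmodule p)))
    (e.toEquiv.trans Multiplicative.toAdd) (fun g M => ?_) N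
  simp

theorem exists_mulEquiv_pi_zmod {p : ℕ} [Fact p.Prime] [Finite G] [Nontrivial G]
    (hcomm : ∀ a b : G, a * b = b * a) (hpow : ∀ g : G, g ^ p = 1) :
    ∃ m, Nonempty (G ≃* (Fin (m + 1) → Multiplicative (ZMod p))) := by
  let _ : CommGroup G := { ‹Group G› with mul_comm := hcomm }
  -- kept opaque: unfolded, `zmodModule` is a `match` on `p` that blocks instance search
  obtain ⟨_⟩ : Nonempty (Module (ZMod p) (Additive G)) :=
    ⟨AddCommGroup.zmodModule fun x => hpow x.toMul⟩
  have : Module.Finite (ZMod p) (Additive G) := .of_finite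
  obtain ⟨m, ⟨e⟩⟩ := Module.exists_linearEquiv_fin_succ (K := ZMod p) (M := Additive G)
  exact ⟨m, ⟨(MulEquiv.multiplicativeAdditive G).symm.trans
    ((AddEquiv.toMultiplicative e.toAddEquiv).trans (MulEquiv.funMultiplicative _ _))⟩⟩

variable {p : ℕ} [Fact p.Prime] [Finite G] (hG : IsPGroup p G) {N : ℕ} {𝒞 : Finset (Subgroup G)}
include hG

theorem IsCCover.commute_of_isPGroup (h : IsCCover N 𝒞) : ∀ a b : G, a * b = b * a := by
  obtain ⟨-, -, -, -, hcoatom, hcore⟩ := h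
  have hle : commutator G ≤ 𝒞.inf id :=
    Finset.le_inf fun M hM => hG.commutator_le_of_isCoatom (hcoatom M hM)
  have hbot : commutator G = ⊥ := by
    rw [eq_bot_iff, ← hcore]
    exact Subgroup.normal_le_normalCore.2 hle
  intro a b
  have := Subgroup.commutator_mem_commutator (Subgroup.mem_top a) (Subgroup.mem_top b)
  rw [← commutator_def, hbot, Subgroup.mem_bot] at this
  exact commutatorElement_eq_one_iff_mul_comm.1 this

theorem IsCCover.pow_eq_one_of_isPGroup (h : IsCCover N 𝒞) (g : G) : g ^ p = 1 := by
  have h' := ((isCCover_iff_of_commute (h.commute_of_isPGroup hG)).1 h).2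
  have : g ^ p ∈ sInf (𝒞 : Set (Subgroup G)) :=
    Subgroup.mem_sInf.2 fun M hM => hG.pow_mem_of_isCoatom (h'.isCoatom M hM) g
  rwa [h'.sInf_eq_bot, Subgroup.mem_bot] at this

theorem IsCCover.exists_mulEquiv_pi (h : IsCCover N 𝒞) :
    ∃ m, Nonempty (G ≃* (Fin (m + 1) → Multiplicative (ZMod p))) := by
  have hcomm := h.commute_of_isPGroup hG
  have hpow := h.pow_eq_one_of_isPGroup hG
  obtain ⟨-, hne, hcover, -⟩ := h
  have : Nontrivial G := by
    obtain ⟨M, hM, -⟩ := hcover 1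
    exact Subgroup.nontrivial_iff.1 (nontrivial_of_ne M ⊤ (hne M hM))
  exact exists_mulEquiv_pi_zmod hcomm hpow

end ElementaryAbelian

theorem Submodule.isCoatom_iff_finrank_add_one {K V : Type*} [DivisionRing K] [AddCommGroup V]
    [Module K V] [FiniteDimensional K V] {W : Submodule K V} :
    IsCoatom W ↔ finrank K W + 1 = finrank K V := by
  rw [← isSimpleModule_iff_isCoatom, isSimpleModule_iff_finrank_eq_one,
    ← W.finrank_quotient_add_finrank]
  omega

theorem Submodule.isCover_iff_forall_isAtom {K V : Type*} [DivisionRing K] [AddCommGroup V]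
    [Module K V] [Nontrivial V] {𝒞 : Set (Submodule K V)} :
    IsCover 𝒞 ↔ ∀ A, IsAtom A → ∃ W ∈ 𝒞, A ≤ W := by
  refine ⟨fun h A hA => ?_, fun h v => ?_⟩
  · obtain ⟨v, -, rfl⟩ := (atom_iff_nonzero_span A).1 hA
    obtain ⟨W, hW, hvW⟩ := h v
    exact ⟨W, hW, (Submodule.span_singleton_le_iff_mem v W).2 hvW⟩
  · by_cases hv : v = 0
    · obtain ⟨u, hu⟩ := exists_ne (0 : V)
      obtain ⟨W, hW, -⟩ := h _ (nonzero_span_atom u hu)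
      exact ⟨W, hW, hv ▸ W.zero_mem⟩
    · obtain ⟨W, hW, hvW⟩ := h _ (nonzero_span_atom v hv)
      exact ⟨W, hW, (Submodule.span_singleton_le_iff_mem v W).1 hvW⟩

theorem OrderIso.forall_isCoatom_iff_forall_isAtom {α β : Type*} [PartialOrder α]
    [BoundedOrder α] [PartialOrder β] [BoundedOrder β] (δ : α ≃o βᵒᵈ) {P : β → Prop} :
    (∀ a, IsCoatom a → P (OrderDual.ofDual (δ a))) ↔ ∀ b, IsAtom b → P b := by
  have hδ : ∀ a, IsAtom (OrderDual.ofDual (δ a)) ↔ IsCoatom a := fun a => by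
    rw [← isCoatom_dual_iff_isAtom, OrderDual.toDual_ofDual, δ.isCoatom_iff]
  refine ⟨fun h b hb => ?_, fun h a ha => h _ ((hδ a).2 ha)⟩
  simpa using h (δ.symm (OrderDual.toDual b)) ((hδ _).1 (by simpa using hb))

theorem Submodule.nonempty_orderIso_orderDual {K V : Type*} [Field K] [AddCommGroup V]
    [Module K V] [FiniteDimensional K V] : Nonempty (Submodule K V ≃o (Submodule K V)ᵒᵈ) :=
  ⟨Subspace.orderIsoFiniteDimensional.trans
    (Submodule.orderIsoMapComap (Module.finBasis K V).toDualEquiv.symm).dual⟩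

section Correlation

open OrderDual Projectivization

variable {K V : Type*} [DivisionRing K] [AddCommGroup V] [Module K V]
  (δ : Submodule K V ≃o (Submodule K V)ᵒᵈ)

def dualHyperplane (x : ℙ K V) : Submodule K V := ofDual (δ x.submodule)

theorem isCoatom_dualHyperplane (x : ℙ K V) : IsCoatom (dualHyperplane δ x) := by
  rw [dualHyperplane, ← isAtom_dual_iff_isCoatom, toDual_ofDual, δ.isAtom_iff,
    Submodule.isAtom_iff_finrank_eq_one]
  exact x.finrank_submodule

theorem dualHyperplane_injective : Function.Injective (dualHyperplane δ) :=
  fun _ _ h => submodule_injective (δ.injective (ofDual.injective h))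

theorem exists_dualHyperplane_eq {W : Submodule K V} (hW : IsCoatom W) :
    ∃ x, dualHyperplane δ x = W := by
  have hA : finrank K (δ.symm (toDual W)) = 1 := by
    rwa [← Submodule.isAtom_iff_finrank_eq_one, δ.symm.isAtom_iff, isAtom_dual_iff_isCoatom]
  exact ⟨mk'' _ hA, by simp [dualHyperplane, submodule_mk'']⟩

theorem rep_mem_iff_le_dualHyperplane {x : ℙ K V} {W : Submodule K V} :
    x.rep ∈ W ↔ ofDual (δ W) ≤ dualHyperplane δ x := by
  rw [dualHyperplane, ofDual_le_ofDual, δ.le_iff_le, submodule_eq,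
    Submodule.span_singleton_le_iff_mem]

theorem sInf_image_dualHyperplane (B : Set (ℙ K V)) :
    sInf (dualHyperplane δ '' B) = ofDual (δ (Submodule.span K (Projectivization.rep '' B))) := by
  rw [Submodule.span_eq_iSup_of_singleton_spans, iSup_image, map_iSup₂, sInf_image]
  simp only [ofDual_iSup, dualHyperplane, submodule_eq]

end Correlation

section BlockingSet

open OrderDual Projectivization

variable {K : Type*} [Field K] {m : ℕ}

theorem IsBlockingSet.pos {B : Set (ℙ K (Fin (m + 1) → K))} (hB : IsBlockingSet B) : 0 < m := by
  refine Nat.pos_of_ne_zero fun hm => ?_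
  obtain ⟨x, -, hx⟩ := hB ⊥ (by rw [finrank_bot, hm])
  exact x.rep_nonzero ((Submodule.mem_bot K).1 hx)

theorem projSpan_eq_top_iff_finrank_eq {B : Set (ℙ K (Fin (m + 1) → K))} :
    projSpan B = ⊤ ↔ finrank K (projSpan B) = m + 1 := by
  rw [Submodule.eq_top_iff_finrank_eq, finrank_fin_fun]

variable (δ : Submodule K (Fin (m + 1) → K) ≃o (Submodule K (Fin (m + 1) → K))ᵒᵈ)

theorem isBlockingSet_iff_isCover (B : Set (ℙ K (Fin (m + 1) → K))) :
    IsBlockingSet B ↔ IsCover (dualHyperplane δ '' B) := by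
  have hcoatom : ∀ W : Submodule K (Fin (m + 1) → K), finrank K W = m ↔ IsCoatom W := fun W => by
    rw [Submodule.isCoatom_iff_finrank_add_one, finrank_fin_fun]
    omega
  simp only [IsBlockingSet, hcoatom, rep_mem_iff_le_dualHyperplane δ]
  rw [δ.forall_isCoatom_iff_forall_isAtom (P := fun A => ∃ x ∈ B, A ≤ dualHyperplane δ x),
    Submodule.isCover_iff_forall_isAtom]
  simp only [Set.exists_mem_image]

theorem isIrredundantCoatomCover_image_dualHyperplane_iff (B : Set (ℙ K (Fin (m + 1) → K))) :
    IsIrredundantCoatomCover (dualHyperplane δ '' B) ↔ IsMinimalBlockingSet B ∧ projSpan B = ⊤ := by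
  have hirr := Set.forall_ssubset_image_iff (dualHyperplane_injective δ) (s := B)
    (P := fun 𝒟 => ¬ IsCover 𝒟)
  have hinf : sInf (dualHyperplane δ '' B) = ⊥ ↔ projSpan B = ⊤ := by
    rw [sInf_image_dualHyperplane, projSpan]
    exact map_eq_top_iff δ
  simp only [IsMinimalBlockingSet, isBlockingSet_iff_isCover δ]
  refine ⟨fun ⟨hcov, hirr', _, hbot⟩ => ⟨⟨hcov, hirr.1 hirr'⟩, hinf.1 hbot⟩,
    fun ⟨⟨hcov, hmin⟩, hspan⟩ => ⟨hcov, hirr.2 hmin, ?_, hinf.2 hspan⟩⟩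
  rintro _ ⟨x, -, rfl⟩
  exact isCoatom_dualHyperplane δ x

theorem exists_isIrredundantCoatomCover_iff_exists_isMinimalBlockingSet (N : ℕ) :
    (∃ 𝒞 : Set (Submodule K (Fin (m + 1) → K)), 𝒞.ncard = N ∧ IsIrredundantCoatomCover 𝒞) ↔
      ∃ B : Set (ℙ K (Fin (m + 1) → K)),
        IsMinimalBlockingSet B ∧ finrank K (projSpan B) = m + 1 ∧ B.ncard = N := by
  obtain ⟨δ⟩ := Submodule.nonempty_orderIso_orderDual (K := K) (V := Fin (m + 1) → K)
  have hcard := fun B => Set.ncard_image_of_injective B (dualHyperplane_injective δ)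
  simp only [← projSpan_eq_top_iff_finrank_eq]
  constructor
  · rintro ⟨𝒞, rfl, h𝒞⟩
    have h𝒞eq : dualHyperplane δ '' (dualHyperplane δ ⁻¹' 𝒞) = 𝒞 :=
      Set.image_preimage_eq_of_subset fun W hW => exists_dualHyperplane_eq δ (h𝒞.isCoatom W hW)
    rw [← h𝒞eq, isIrredundantCoatomCover_image_dualHyperplane_iff] at h𝒞
    exact ⟨_, h𝒞.1, h𝒞.2, by rw [← hcard, h𝒞eq]⟩
  · rintro ⟨B, hB, hspan, rfl⟩
    exact ⟨_, hcard B, (isIrredundantCoatomCover_image_dualHyperplane_iff δ B).2 ⟨hB, hspan⟩⟩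

end BlockingSet

theorem exists_isCCover_iff_exists_isMinimalBlockingSet {G : Type*} [Group G] {p : ℕ}
    [Fact p.Prime] {m : ℕ} (e : G ≃* (Fin (m + 1) → Multiplicative (ZMod p))) {N : ℕ}
    (hN : N ≠ 0) :
    (∃ 𝒞 : Finset (Subgroup G), IsCCover N 𝒞) ↔
      ∃ B : Set (ℙ (ZMod p) (Fin (m + 1) → ZMod p)),
        IsMinimalBlockingSet B ∧ finrank (ZMod p) (projSpan B) = m + 1 ∧ B.ncard = N :=
  (exists_isCCover_iff_of_mulEquiv (e.trans (MulEquiv.funMultiplicative _ _).symm) hN).trans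
    (exists_isIrredundantCoatomCover_iff_exists_isMinimalBlockingSet N)

theorem statement_11_general (p : ℕ) [Fact p.Prime] (n : ℕ)
    {G : Type*} [Group G] [Finite G] (hG : IsPGroup p G) :
    (∃ 𝒞 : Finset (Subgroup G), IsCCover (n + 1) 𝒞) ↔
      ∃ m : ℕ, 0 < m ∧ Nonempty (G ≃* (Fin (m + 1) → Multiplicative (ZMod p))) ∧
        ∃ B : Set (Projectivization (ZMod p) (Fin (m + 1) → ZMod p)),
          IsMinimalBlockingSet B ∧
          Module.finrank (ZMod p) (projSpan B) = m + 1 ∧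
          B.ncard = n + 1 := by
  constructor
  · rintro ⟨𝒞, h𝒞⟩
    obtain ⟨m, ⟨e⟩⟩ := h𝒞.exists_mulEquiv_pi hG
    obtain ⟨B, hB, hspan, hcard⟩ :=
      (exists_isCCover_iff_exists_isMinimalBlockingSet e n.succ_ne_zero).1 ⟨𝒞, h𝒞⟩
    exact ⟨m, hB.1.pos, ⟨e⟩, B, hB, hspan, hcard⟩
  · rintro ⟨m, -, ⟨e⟩, hB⟩
    exact (exists_isCCover_iff_exists_isMinimalBlockingSet e n.succ_ne_zero).2 hB

theorem statement_11 (p : ℕ) [Fact p.Prime] (n : ℕ) (hn : 0 < n)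
    {G : Type*} [Group G] [Finite G] (hG : IsPGroup p G) :
    (∃ 𝒞 : Finset (Subgroup G), IsCCover (n + 1) 𝒞) ↔
      ∃ m : ℕ, 0 < m ∧ Nonempty (G ≃* (Fin (m + 1) → Multiplicative (ZMod p))) ∧
        ∃ B : Set (Projectivization (ZMod p) (Fin (m + 1) → ZMod p)),
          IsMinimalBlockingSet B ∧
          Module.finrank (ZMod p) (projSpan B) = m + 1 ∧
          B.ncard = n + 1 :=
  statement_11_general p n hG
end

section
/- Let p be a prime number and let G be a finite p-group admitting a 𝔠_n-cover for some positive integer n. Then p ≤ n − 1. -/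
/-!
By B. H. Neumann's lemma, subgroups `H i` covering a group satisfy `1 ≤ ∑ i, 1 / [G : H i]`,
and in case of equality those of finite index are pairwise disjoint. Subgroups all contain `1`,
so equality would make a single subgroup cover the group: a cover by proper subgroups has
`1 < ∑ i, 1 / [G : H i]`. In a `p`-group a proper subgroup has index `0` or a positive power
of `p`, so `1 / [G : H i] ≤ 1 / p`, and a cover by `n` proper subgroups forces `1 < n / p`.
-/

open scoped Pointwise

namespace Subgroup

theorem one_lt_sum_inv_index_of_cover {G : Type*} [Group G] {ι : Type*} {H : ι → Subgroup G}
    {s : Finset ι} (hproper : ∀ i ∈ s, H i ≠ ⊤) (hcovers : ⋃ i ∈ s, (H i : Set G) = Set.univ) :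
    1 < ∑ i ∈ s, ((H i).index : ℚ)⁻¹ := by
  classical
  have hcosets : ⋃ i ∈ s, (1 : ι → G) i • (H i : Set G) = Set.univ := by
    simpa only [Pi.one_apply, one_smul] using hcovers
  refine (one_le_sum_inv_index_of_leftCoset_cover hcosets).lt_of_ne fun hsum => ?_
  have hdisj := pairwiseDisjoint_leftCoset_cover_of_sum_inv_index_eq_one hcosets hsum.symm
  have hcov := leftCoset_cover_filter_FiniteIndex hcosets
  simp only [Pi.one_apply, one_smul] at hdisj hcov
  obtain ⟨k, hk, -⟩ := Set.mem_iUnion₂.mp (hcov.symm ▸ Set.mem_univ (1 : G))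
  refine hproper k (Finset.mem_filter.mp hk).1 (eq_top_iff.mpr fun x _ => ?_)
  obtain ⟨j, hj, hx⟩ := Set.mem_iUnion₂.mp (hcov.symm ▸ Set.mem_univ x)
  obtain rfl : j = k := by
    by_contra hjk
    exact Set.disjoint_left.mp (hdisj hj hk hjk) (one_mem (H j)) (one_mem (H k))
  exact hx

end Subgroup

namespace IsPGroup

variable {p : ℕ} [hp : Fact p.Prime] {G : Type*} [Group G]

theorem le_index_of_ne_top (hG : IsPGroup p G) {H : Subgroup G} (hH : H ≠ ⊤) [H.FiniteIndex] :
    p ≤ H.index := by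
  obtain ⟨k, hk⟩ := hG.index H
  have hk0 : k ≠ 0 := by
    rintro rfl
    exact hH (Subgroup.index_eq_one.mp (hk.trans (pow_zero p)))
  rw [hk]
  exact Nat.le_self_pow hk0 p

theorem inv_index_le_inv_of_ne_top (hG : IsPGroup p G) {H : Subgroup G} (hH : H ≠ ⊤) :
    (H.index : ℚ)⁻¹ ≤ (p : ℚ)⁻¹ := by
  by_cases hfin : H.FiniteIndex
  · exact inv_anti₀ (by exact_mod_cast hp.out.pos) (by exact_mod_cast hG.le_index_of_ne_top hH)
  · rw [Subgroup.not_finiteIndex_iff.mp hfin, Nat.cast_zero, inv_zero]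
    positivity

theorem lt_card_of_cover (hG : IsPGroup p G) {ι : Type*} {H : ι → Subgroup G} {s : Finset ι}
    (hproper : ∀ i ∈ s, H i ≠ ⊤) (hcovers : ⋃ i ∈ s, (H i : Set G) = Set.univ) :
    p < s.card := by
  have hp0 : (0 : ℚ) < p := by exact_mod_cast hp.out.pos
  have hsum : ∑ i ∈ s, ((H i).index : ℚ)⁻¹ ≤ s.card * (p : ℚ)⁻¹ := by
    simpa only [nsmul_eq_mul] using
      Finset.sum_le_card_nsmul s _ _ fun i hi => hG.inv_index_le_inv_of_ne_top (hproper i hi)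
  have h := (Subgroup.one_lt_sum_inv_index_of_cover hproper hcovers).trans_le hsum
  rw [lt_mul_inv_iff₀ hp0, one_mul] at h
  exact_mod_cast h

end IsPGroup

theorem statement_12_general (p : ℕ) (hp : p.Prime) {G : Type*} [Group G]
    (hG : IsPGroup p G) (n : ℕ)
    (hcov : ∃ 𝒞 : Finset (Subgroup G), IsCCover n 𝒞) :
    p ≤ n - 1 := by
  have : Fact p.Prime := ⟨hp⟩
  obtain ⟨𝒞, rfl, hproper, hcover, -⟩ := hcov
  have hcovers : ⋃ M ∈ 𝒞, (M : Set G) = Set.univ :=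
    Set.eq_univ_of_forall fun g =>
      let ⟨M, hM, hgM⟩ := hcover g
      Set.mem_iUnion₂.mpr ⟨M, hM, hgM⟩
  have := hG.lt_card_of_cover (H := id) hproper hcovers
  omega

theorem statement_12 (p : ℕ) (hp : p.Prime) {G : Type*} [Group G] [Finite G]
    (hG : IsPGroup p G) (n : ℕ) (hn : 0 < n)
    (hcov : ∃ 𝒞 : Finset (Subgroup G), IsCCover n 𝒞) :
    p ≤ n - 1 :=
  statement_12_general p hp hG n hcov
end

section
/- Let p be a prime number, let G be a finite p-group with a 𝔠_n-cover {M_1, …, M_n}, and let s be an integer with 1 ≤ s ≤ n − 2 and p = n − s. Then for every subset S of {1, …, n} with |S| ≥ s + 1, the intersection ⋂_{i ∈ S} M_i is the trivial subgroup. -/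
/-- An indexed version: the (pairwise distinct) subgroups `M 1, …, M n` form a `𝔠ₙ`-cover. -/
def IsCCoverFam {G : Type*} [Group G] (n : ℕ) (M : Fin n → Subgroup G) : Prop :=
  Function.Injective M ∧
    IsCCover n (letI := Classical.decEq (Subgroup G); Finset.univ.image M)

/-!
A nontrivial subgroup of a `p`-group contains an element `x` of order `p`; suppose `x` lies in
`s + 1` members of the cover. If the set `𝒟` of members containing `x` were proper, irredundancy
would give some `g` outside every member of `𝒟`. Then `g, gx, …, gx^(p-1)` lie in pairwise
distinct members not containing `x` (two of them in one member `N` force `x ∈ N`, hence `g ∈ N`),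
which makes at least `(s + 1) + p > n` members. So `x` lies in every member; these are normal,
being maximal subgroups of a nilpotent group, so `x` lies in the trivial normal core.
-/

namespace Subgroup

variable {G : Type*} [Group G]

theorem mem_of_pow_mem_of_coprime {N : Subgroup G} {x : G} {k : ℕ}
    (hk : k.Coprime (orderOf x)) (h : x ^ k ∈ N) : x ∈ N :=
  zpowers_le.mpr h (mem_zpowers_pow_iff.mpr hk)

theorem mem_of_mul_pow_mem_of_mul_pow_mem {N : Subgroup G} {x g : G} {p t u : ℕ}
    (hp : p.Prime) (hx : orderOf x = p) (htu : t < u) (hup : u < p)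
    (ht : g * x ^ t ∈ N) (hu : g * x ^ u ∈ N) : x ∈ N := by
  have hsplit : g * x ^ u = g * x ^ t * x ^ (u - t) := by
    rw [mul_assoc, ← pow_add, Nat.add_sub_cancel' htu.le]
  rw [hsplit, N.mul_mem_cancel_left ht] at hu
  refine mem_of_pow_mem_of_coprime ?_ hu
  rw [hx, Nat.coprime_comm, hp.coprime_iff_not_dvd]
  exact Nat.not_dvd_of_pos_of_lt (by omega) (by omega)

end Subgroup

section Cover

open Finset

variable {G : Type*} [Group G] {𝒞 : Finset (Subgroup G)}

theorem prime_le_card_filter_notMem (hcover : ∀ g : G, ∃ N ∈ 𝒞, g ∈ N)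
    {p : ℕ} (hp : p.Prime) {x g : G} (hx : orderOf x = p) (hg : ∀ N ∈ 𝒞, x ∈ N → g ∉ N)
    [DecidablePred (fun N : Subgroup G ↦ x ∉ N)] :
    p ≤ #{N ∈ 𝒞 | x ∉ N} := by
  choose f hf𝒞 hfmem using fun t : ℕ ↦ hcover (g * x ^ t)
  have hfx : ∀ t, x ∉ f t := fun t hxf ↦
    hg _ (hf𝒞 t) hxf (by simpa using (f t).mul_mem (hfmem t) ((f t).pow_mem (inv_mem hxf) t))
  have hfinj : Set.InjOn f (range p) := by
    intro t ht u hu htu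
    simp only [coe_range, Set.mem_Iio] at ht hu
    by_contra hne
    rcases Nat.lt_or_gt_of_ne hne with h | h
    · exact hfx t (Subgroup.mem_of_mul_pow_mem_of_mul_pow_mem hp hx h hu (hfmem t)
        (htu ▸ hfmem u))
    · exact hfx u (Subgroup.mem_of_mul_pow_mem_of_mul_pow_mem hp hx h ht (hfmem u)
        (htu ▸ hfmem t))
  simpa using card_le_card_of_injOn f (fun t _ ↦ mem_filter.mpr ⟨hf𝒞 t, hfx t⟩) hfinj

theorem forall_mem_of_card_lt (hcover : ∀ g : G, ∃ N ∈ 𝒞, g ∈ N)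
    (hirr : ∀ 𝒟 : Finset (Subgroup G), 𝒟 ⊂ 𝒞 → ∃ g : G, ∀ N ∈ 𝒟, g ∉ N)
    {p : ℕ} (hp : p.Prime) {x : G} (hx : orderOf x = p)
    {𝒟 : Finset (Subgroup G)} (h𝒟 : 𝒟 ⊆ 𝒞) (hx𝒟 : ∀ N ∈ 𝒟, x ∈ N) (hcard : #𝒞 < #𝒟 + p) :
    ∀ N ∈ 𝒞, x ∈ N := by
  classical
  by_contra! hnot
  obtain ⟨g, hg⟩ := hirr {N ∈ 𝒞 | x ∈ N} (filter_ssubset.mpr hnot)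
  have hg' : ∀ N ∈ 𝒞, x ∈ N → g ∉ N := fun N hN hxN ↦ hg N (mem_filter.mpr ⟨hN, hxN⟩)
  have hle := prime_le_card_filter_notMem hcover hp hx hg'
  have h𝒟le : #𝒟 ≤ #{N ∈ 𝒞 | x ∈ N} :=
    card_le_card fun N hN ↦ mem_filter.mpr ⟨h𝒟 hN, hx𝒟 N hN⟩
  have hsplit := card_filter_add_card_filter_not (s := 𝒞) (x ∈ ·)
  omega

theorem eq_one_of_forall_mem_of_normalCore_eq_bot (hnormal : ∀ N ∈ 𝒞, N.Normal)
    (hcore : (𝒞.inf id).normalCore = ⊥) {x : G} (hx : ∀ N ∈ 𝒞, x ∈ N) : x = 1 := by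
  have hle : Subgroup.normalClosure {x} ≤ 𝒞.inf id :=
    Finset.le_inf fun N hN ↦
      have := hnormal N hN
      Subgroup.normalClosure_le_normal (N := N) (Set.singleton_subset_iff.mpr (hx N hN))
  rw [← Subgroup.mem_bot, ← hcore]
  exact Subgroup.normal_le_normalCore.mpr hle (Subgroup.subset_normalClosure rfl)

end Cover

theorem IsPGroup.exists_orderOf_eq_of_ne_bot {p : ℕ} [Fact p.Prime] {G : Type*} [Group G]
    [Finite G] (hG : IsPGroup p G) {H : Subgroup G} (hH : H ≠ ⊥) :
    ∃ x ∈ H, orderOf x = p := by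
  have : Nontrivial H := H.nontrivial_iff_ne_bot.mpr hH
  obtain ⟨k, hk, hcard⟩ := (hG.to_subgroup H).nontrivial_iff_card.mp this
  obtain ⟨y, hy⟩ := exists_prime_orderOf_dvd_card' (G := H) p (hcard ▸ dvd_pow_self p hk.ne')
  exact ⟨y, y.2, by rw [Subgroup.orderOf_coe, hy]⟩

theorem statement_13_general (p : ℕ) (hp : p.Prime) {G : Type*} [Group G] [Finite G]
    (hG : IsPGroup p G) (n : ℕ) (M : Fin n → Subgroup G)
    (hM : IsCCoverFam n M)
    (s : ℕ) (hps : p = n - s)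
    (S : Finset (Fin n)) (hS : s + 1 ≤ S.card) :
    (⨅ i ∈ S, M i) = ⊥ := by
  classical
  have : Fact p.Prime := ⟨hp⟩
  have := hG.isNilpotent
  obtain ⟨hinj, hcard, -, hcover, hirr, hmax, hcore⟩ := hM
  by_contra hne
  obtain ⟨x, hxS, hx⟩ := hG.exists_orderOf_eq_of_ne_bot hne
  have hx_mem : ∀ N ∈ S.image M, x ∈ N := Finset.forall_mem_image.mpr fun i hi ↦
    Subgroup.mem_iInf.mp (Subgroup.mem_iInf.mp hxS i) hi
  have hx_all := forall_mem_of_card_lt hcover hirr hp hx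
    (fun N hN ↦ by obtain ⟨i, -, rfl⟩ := Finset.mem_image.mp hN; simp)
    hx_mem (by rw [Finset.card_image_of_injective S hinj, hcard]; omega)
  have hnormal : ∀ N ∈ _, Subgroup.Normal N := fun N hN ↦
    Subgroup.NormalizerCondition.normal_of_coatom N
      Group.normalizerCondition_of_isNilpotent (hmax N hN)
  have hx1 := eq_one_of_forall_mem_of_normalCore_eq_bot hnormal hcore hx_all
  rw [hx1, orderOf_one] at hx
  exact hp.one_lt.ne hx

theorem statement_13 (p : ℕ) (hp : p.Prime) {G : Type*} [Group G] [Finite G]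
    (hG : IsPGroup p G) (n : ℕ) (M : Fin n → Subgroup G)
    (hM : IsCCoverFam n M)
    (s : ℕ) (hs1 : 1 ≤ s) (hs2 : s ≤ n - 2) (hps : p = n - s)
    (S : Finset (Fin n)) (hS : s + 1 ≤ S.card) :
    (⨅ i ∈ S, M i) = ⊥ :=
  statement_13_general p hp hG n M hM s hps S hS
end

section
/- Let p be a prime number and let G be a finite p-group admitting a 𝔠_{p+1}-cover. Then G is isomorphic to (C_p)^2. -/
open Finset

theorem Finset.pairwiseDisjoint_of_sum_ncard_le {ι α : Type*} [DecidableEq ι] {s : Finset ι}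
    {f : ι → Set α} (hf : ∀ i ∈ s, (f i).Finite)
    (h : ∑ i ∈ s, (f i).ncard ≤ (⋃ i ∈ s, f i).ncard) :
    (s : Set ι).PairwiseDisjoint f := by
  induction s using Finset.induction_on with
  | empty => simp
  | insert i s hi ih =>
    have hfs : ∀ j ∈ s, (f j).Finite := fun j hj => hf j (mem_insert_of_mem hj)
    rw [sum_insert hi, set_biUnion_insert] at h
    have hunion := Set.ncard_union_le (f i) (⋃ j ∈ s, f j)
    have hbiUnion := s.set_ncard_biUnion_le f
    have hdisj : Disjoint (f i) (⋃ j ∈ s, f j) :=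
      (Set.ncard_union_eq_iff (s := f i) (t := ⋃ j ∈ s, f j) (hf i (mem_insert_self i s))
        (s.finite_toSet.biUnion hfs : (⋃ j ∈ s, f j).Finite)).mp (by omega)
    rw [coe_insert]
    exact (ih hfs (by omega)).insert fun j hj _ =>
      hdisj.mono_right (Set.subset_biUnion_of_mem (u := f) hj)

theorem ZMod.nonempty_linearEquiv_pi_of_card_eq {p n : ℕ} [hp : Fact p.Prime] {V : Type*}
    [AddCommGroup V] [Module (ZMod p) V] [Finite V] (hcard : Nat.card V = p ^ n) :
    Nonempty (V ≃ₗ[ZMod p] (Fin n → ZMod p)) := by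
  have : Module.Finite (ZMod p) V := Module.Finite.of_finite
  refine FiniteDimensional.nonempty_linearEquiv_of_finrank_eq ?_
  rw [Module.finrank_fin_fun]
  rw [Module.natCard_eq_pow_finrank (K := ZMod p), Nat.card_zmod] at hcard
  exact Nat.pow_right_injective hp.out.two_le hcard

theorem nonempty_mulEquiv_pi_zmod_of_pow_eq_one {p n : ℕ} [Fact p.Prime] {G : Type*} [CommGroup G]
    [Finite G] (hexp : ∀ g : G, g ^ p = 1) (hcard : Nat.card G = p ^ n) :
    Nonempty (G ≃* (Fin n → Multiplicative (ZMod p))) := by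
  let _ : Module (ZMod p) (Additive G) := AddCommGroup.zmodModule fun x => hexp x.toMul
  have : Finite (Additive G) := ‹Finite G›
  obtain ⟨e⟩ := ZMod.nonempty_linearEquiv_pi_of_card_eq (V := Additive G) hcard
  exact ⟨(MulEquiv.multiplicativeAdditive G).symm.trans
    ((AddEquiv.toMultiplicative e.toAddEquiv).trans (MulEquiv.piMultiplicative _))⟩

namespace IsPGroup

variable {p : ℕ} [hp : Fact p.Prime] {G : Type*} [Group G] [Finite G]

theorem normal_of_isCoatom_s14 (hG : IsPGroup p G) {M : Subgroup G} (hM : IsCoatom M) : M.Normal :=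
  have := hG.isNilpotent
  Subgroup.NormalizerCondition.normal_of_coatom M Group.normalizerCondition_of_isNilpotent hM

theorem index_of_isCoatom (hG : IsPGroup p G) {M : Subgroup G} (hM : IsCoatom M) :
    M.index = p := by
  obtain ⟨k, hk⟩ := (hG.to_subgroup M).exists_card_eq
  obtain ⟨j, hj⟩ := hG.index M
  have hj0 : j ≠ 0 := by
    rintro rfl
    exact hM.1 (Subgroup.index_eq_one.mp (by simpa using hj))
  obtain ⟨K, hK, hMK⟩ := Sylow.exists_subgroup_card_pow_succ (p := p) (G := G)
    (by rw [← M.card_mul_index, hk, hj, pow_succ]; exact mul_dvd_mul_left _ (dvd_pow_self p hj0))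
    hk
  have hMK' : M ≠ K := by
    rintro rfl
    have := Nat.pow_lt_pow_right hp.out.one_lt (Nat.lt_add_one k)
    omega
  have hKtop : K = ⊤ := hM.2 K (lt_of_le_of_ne hMK hMK')
  have := M.card_mul_index
  rw [← Subgroup.card_top (G := G), ← hKtop, hK, hk, pow_succ] at this
  exact Nat.eq_of_mul_eq_mul_left (pow_pos hp.out.pos k) this

theorem card_mul_of_isCoatom (hG : IsPGroup p G) {M : Subgroup G} (hM : IsCoatom M) :
    Nat.card M * p = Nat.card G :=
  hG.index_of_isCoatom hM ▸ M.card_mul_index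

theorem index_inf_of_isCoatom (hG : IsPGroup p G) {K L : Subgroup G} (hK : IsCoatom K)
    (hL : IsCoatom L) (hKL : K ≠ L) : (K ⊓ L).index = p ^ 2 := by
  have := hG.normal_of_isCoatom_s14 hL
  have hrel : L.relIndex K = p := by
    have hdvd := hG.index_of_isCoatom hL ▸ L.relIndex_dvd_index_of_normal K
    refine (hp.out.eq_one_or_self_of_dvd _ hdvd).resolve_left fun h => hKL ?_
    exact hK.le_iff.mp (Subgroup.relIndex_eq_one.mp h) |>.resolve_left hL.1 |>.symm
  rw [← Subgroup.relIndex_mul_index inf_le_left, inf_comm, Subgroup.inf_relIndex_right, hrel,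
    hG.index_of_isCoatom hK, sq]

theorem ncard_sdiff_of_isCoatom (hG : IsPGroup p G) {K L : Subgroup G} (hK : IsCoatom K)
    (hL : IsCoatom L) (hKL : K ≠ L) :
    ((K : Set G) \ L).ncard * p ^ 2 = Nat.card G * (p - 1) := by
  have hsplit := Set.ncard_inter_add_ncard_sdiff_eq_ncard (K : Set G) L
  have hcardK := hG.card_mul_of_isCoatom hK
  have hcardKL := hG.index_inf_of_isCoatom hK hL hKL ▸ (K ⊓ L).card_mul_index
  simp only [← Subgroup.coe_inf, ← Nat.card_coe_set_eq, SetLike.coe_sort_coe] at hsplit ⊢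
  zify [hp.out.one_le] at *
  linear_combination (p : ℤ) ^ 2 * hsplit - hcardKL + p * hcardK

theorem pairwiseDisjoint_sdiff_of_isCoatom_cover [DecidableEq (Subgroup G)] (hG : IsPGroup p G)
    {𝒞 : Finset (Subgroup G)} (hcard : #𝒞 = p + 1) (hcov : ∀ g, ∃ M ∈ 𝒞, g ∈ M)
    (hmax : ∀ M ∈ 𝒞, IsCoatom M) {L : Subgroup G} (hL : L ∈ 𝒞) :
    (↑(𝒞.erase L) : Set (Subgroup G)).PairwiseDisjoint fun K => (K : Set G) \ L := by
  refine pairwiseDisjoint_of_sum_ncard_le (fun _ _ => Set.toFinite _) ?_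
  have hcompl : (L : Set G)ᶜ ⊆ ⋃ K ∈ 𝒞.erase L, (K : Set G) \ L := by
    intro g hg
    obtain ⟨K, hK, hgK⟩ := hcov g
    exact Set.mem_biUnion (mem_erase.2 ⟨fun h => hg (h ▸ hgK), hK⟩) ⟨hgK, hg⟩
  have hsum :
      (∑ K ∈ 𝒞.erase L, ((K : Set G) \ L).ncard) * p ^ 2 = (L : Set G)ᶜ.ncard * p ^ 2 := by
    rw [sum_mul, sum_congr rfl fun K hK => hG.ncard_sdiff_of_isCoatom
      (hmax K (mem_of_mem_erase hK)) (hmax L hL) (ne_of_mem_erase hK), sum_const,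
      card_erase_of_mem hL, hcard, smul_eq_mul, Nat.add_sub_cancel]
    have hsplit := Set.ncard_compl_add_ncard (L : Set G)
    have hcardL := hG.card_mul_of_isCoatom (hmax L hL)
    rw [← SetLike.coe_sort_coe, Nat.card_coe_set_eq] at hcardL
    zify [hp.out.one_le] at *
    linear_combination -(p : ℤ) ^ 2 * hsplit + p * hcardL
  calc ∑ K ∈ 𝒞.erase L, ((K : Set G) \ L).ncard = (L : Set G)ᶜ.ncard :=
        Nat.eq_of_mul_eq_mul_right (pow_pos hp.out.pos 2) hsum
    _ ≤ _ := Set.ncard_le_ncard hcompl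

theorem inf_le_of_isCoatom_cover (hG : IsPGroup p G) {𝒞 : Finset (Subgroup G)}
    (hcard : #𝒞 = p + 1) (hcov : ∀ g, ∃ M ∈ 𝒞, g ∈ M) (hmax : ∀ M ∈ 𝒞, IsCoatom M)
    {L M N : Subgroup G} (hL : L ∈ 𝒞) (hM : M ∈ 𝒞) (hN : N ∈ 𝒞) (hMN : M ≠ N) : M ⊓ N ≤ L := by
  classical
  rintro x ⟨hxM, hxN⟩
  by_contra hxL
  obtain rfl | hML := eq_or_ne M L
  · exact hxL hxM
  obtain rfl | hNL := eq_or_ne N L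
  · exact hxL hxN
  have hdisj := hG.pairwiseDisjoint_sdiff_of_isCoatom_cover hcard hcov hmax hL
    (mem_erase.2 ⟨hML, hM⟩) (mem_erase.2 ⟨hNL, hN⟩) hMN
  exact Set.disjoint_left.mp hdisj ⟨hxM, hxL⟩ ⟨hxN, hxL⟩

theorem card_eq_sq_of_isCoatom_cover (hG : IsPGroup p G) {𝒞 : Finset (Subgroup G)}
    (hcard : #𝒞 = p + 1) (hcov : ∀ g, ∃ M ∈ 𝒞, g ∈ M) (hmax : ∀ M ∈ 𝒞, IsCoatom M)
    (hcore : (𝒞.inf id).normalCore = ⊥) : Nat.card G = p ^ 2 := by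
  obtain ⟨M, hM, N, hN, hMN⟩ := one_lt_card.mp (by rw [hcard]; linarith [hp.out.two_le])
  have := hG.normal_of_isCoatom_s14 (hmax M hM)
  have := hG.normal_of_isCoatom_s14 (hmax N hN)
  have hbot : M ⊓ N = ⊥ := le_bot_iff.mp <| hcore ▸ Subgroup.normal_le_normalCore.mpr
    (Finset.le_inf fun L hL => hG.inf_le_of_isCoatom_cover hcard hcov hmax hL hM hN hMN)
  rw [← Subgroup.index_bot, ← hbot, hG.index_inf_of_isCoatom (hmax M hM) (hmax N hN) hMN]

end IsPGroup

theorem statement_14 (p : ℕ) (hp : p.Prime) {G : Type*} [Group G] [Finite G]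
    (hG : IsPGroup p G)
    (hcov : ∃ 𝒞 : Finset (Subgroup G), IsCCover (p + 1) 𝒞) :
    Nonempty (G ≃* (Fin 2 → Multiplicative (ZMod p))) := by
  have : Fact p.Prime := ⟨hp⟩
  obtain ⟨𝒞, hcard, -, hcover, -, hmax, hcore⟩ := hcov
  have hcardG := hG.card_eq_sq_of_isCoatom_cover hcard hcover hmax hcore
  have hexp : ∀ g : G, g ^ p = 1 := by
    intro g
    obtain ⟨K, hK, hgK⟩ := hcover g
    have hcardK : Nat.card K = p := by
      have := hG.card_mul_of_isCoatom (hmax K hK)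
      rw [hcardG, sq] at this
      exact Nat.eq_of_mul_eq_mul_right hp.pos this
    exact orderOf_dvd_iff_pow_eq_one.mp (hcardK ▸ K.orderOf_dvd_natCard hgK)
  let _ := IsPGroup.commGroupOfCardEqPrimeSq hcardG
  exact nonempty_mulEquiv_pi_zmod_of_pow_eq_one hexp hcardG
end

section
/- Let p be a prime number, let d ≥ 2 be an integer, and suppose G = (C_p)^d has a 𝔠_n-cover {M_1, …, M_n}. Then for every subset T of {1, …, n} with |T| = n − p, the order of the intersection ⋂_{i ∈ T} M_i is either 1 or p. -/
/-!
Let `W = ⋂_{i ∈ T} M_i` and suppose `W ⊄ M_j`. Irredundance gives `g` lying in `M_j` only, and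
every element of the coset `gW` lies in some `M_k` with `W ⊄ M_k` (at most `p` such `k`). So `gW`,
translated back to `W`, is covered by at most `p` cosets of the proper subgroups `M_k ∩ W`.
In the `p`-group `W` this forces, by Neumann's density count `∑ 1/index ≥ 1`, exactly `p`
pairwise disjoint cosets of index-`p` subgroups; since cosets of two distinct index-`p`
subgroups of an abelian group always meet, all `M_k ∩ W` coincide. Then `M_j ∩ W` lies in
every `M_i`, hence in the trivial core, so `|W| = p`.
-/

open Finset Pointwise

namespace Subgroup

variable {G : Type*} [Group G]

theorem sup_eq_top_of_index_prime {H K : Subgroup G} (hH : H.index.Prime) (hK : ¬K ≤ H) :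
    H ⊔ K = ⊤ := by
  have hmul := relIndex_mul_index (le_sup_left : H ≤ H ⊔ K)
  rcases Nat.prime_mul_iff.1 (hmul ▸ hH) with ⟨-, h⟩ | ⟨-, h⟩
  · exact index_eq_one.1 h
  · exact absurd (relIndex_eq_one.1 h) fun hle => hK (le_sup_right.trans hle)

theorem exists_smul_subgroupOf_of_mul_mem (M W : Subgroup G) (g : G) :
    ∃ x : W, ∀ w : W, g * w ∈ M → w ∈ x • (M.subgroupOf W : Set W) := by
  by_cases h : ∃ y : W, g * y ∈ M
  · obtain ⟨y, hy⟩ := h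
    refine ⟨y, fun w hw => ?_⟩
    rw [mem_leftCoset_iff, SetLike.mem_coe, mem_subgroupOf]
    simpa [mul_assoc] using M.mul_mem (M.inv_mem hy) hw
  · exact ⟨1, fun w hw => absurd ⟨w, hw⟩ h⟩

end Subgroup

theorem not_disjoint_smul_of_sup_eq_top {G : Type*} [CommGroup G] {H K : Subgroup G}
    (hHK : H ⊔ K = ⊤) (a b : G) :
    ¬Disjoint (a • (H : Set G)) (b • (K : Set G)) := by
  obtain ⟨y, hy, z, hz, hyz⟩ := Subgroup.mem_sup.1 (hHK ▸ Subgroup.mem_top (a⁻¹ * b))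
  refine Set.not_disjoint_iff.2 ⟨a * y, ?_, ?_⟩
  · rw [mem_leftCoset_iff, inv_mul_cancel_left]
    exact hy
  · rw [mem_leftCoset_iff,
      show b⁻¹ * (a * y) = z⁻¹ by rw [← mul_inv_eq_iff_eq_mul.2 hyz.symm]; group]
    exact K.inv_mem hz

namespace IsPGroup

variable {G : Type*} [Group G] [Finite G] {p : ℕ} [Fact p.Prime] (hG : IsPGroup p G)
include hG

theorem prime_le_index {H : Subgroup G} (hH : H ≠ ⊤) : p ≤ H.index := by
  obtain ⟨k, hk⟩ := hG.index H
  have hk0 : k ≠ 0 := by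
    rintro rfl
    exact hH (Subgroup.index_eq_one.1 (by simpa using hk))
  exact hk ▸ Nat.le_self_pow hk0 p

variable {ι : Type*} {H : ι → Subgroup G} {g : ι → G} {s : Finset ι}

theorem card_eq_and_index_eq_of_leftCoset_cover
    (hcovers : ⋃ i ∈ s, g i • (H i : Set G) = Set.univ) (hs : #s ≤ p)
    (hH : ∀ i ∈ s, H i ≠ ⊤) : #s = p ∧ ∀ i ∈ s, (H i).index = p := by
  have hp : (0 : ℚ) < p := by exact_mod_cast (Fact.out : p.Prime).pos
  have hle : ∀ i ∈ s, ((H i).index : ℚ)⁻¹ ≤ (p : ℚ)⁻¹ := fun i hi =>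
    inv_anti₀ hp (by exact_mod_cast hG.prime_le_index (hH i hi))
  have hdensity := Subgroup.one_le_sum_inv_index_of_leftCoset_cover hcovers
  have hsum_le : ∑ i ∈ s, ((H i).index : ℚ)⁻¹ ≤ #s / p := by
    simpa [div_eq_mul_inv] using sum_le_sum hle
  have hcard : #s = p := by
    refine le_antisymm hs ?_
    have : (p : ℚ) ≤ #s := by rw [← one_le_div hp]; exact hdensity.trans hsum_le
    exact_mod_cast this
  refine ⟨hcard, fun i hi => ?_⟩
  have heq : ∑ i ∈ s, ((H i).index : ℚ)⁻¹ = ∑ _i ∈ s, (p : ℚ)⁻¹ := by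
    refine le_antisymm (sum_le_sum hle) ?_
    rw [sum_const, hcard, nsmul_eq_mul, mul_inv_cancel₀ hp.ne']
    exact hdensity
  exact_mod_cast inv_inj.1 ((sum_eq_sum_iff_of_le hle).1 heq i hi)

end IsPGroup

theorem IsPGroup.eq_of_leftCoset_cover {G : Type*} [CommGroup G] [Finite G] {p : ℕ}
    [Fact p.Prime] (hG : IsPGroup p G) {ι : Type*} {H : ι → Subgroup G} {g : ι → G}
    {s : Finset ι} (hcovers : ⋃ i ∈ s, g i • (H i : Set G) = Set.univ) (hs : #s ≤ p)
    (hH : ∀ i ∈ s, H i ≠ ⊤) {i j : ι} (hi : i ∈ s) (hj : j ∈ s) : H i = H j := by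
  classical
  obtain ⟨hcard, hindex⟩ := hG.card_eq_and_index_eq_of_leftCoset_cover hcovers hs hH
  have hdisj := Subgroup.pairwiseDisjoint_leftCoset_cover_of_sum_inv_index_eq_one hcovers (by
    rw [sum_congr rfl fun i hi => by rw [hindex i hi], sum_const, hcard, nsmul_eq_mul,
      mul_inv_cancel₀ (by exact_mod_cast (Fact.out : p.Prime).ne_zero)])
  rw [filter_true_of_mem fun i _ => Subgroup.finiteIndex_of_finite] at hdisj
  by_contra hne
  wlog hji : ¬H j ≤ H i generalizing i j
  · exact this hj hi (Ne.symm hne) fun h => hne (le_antisymm h (not_not.1 hji))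
  have hij : i ≠ j := fun h => hne (h ▸ rfl)
  have hsup := Subgroup.sup_eq_top_of_index_prime (hindex i hi ▸ Fact.out) hji
  exact not_disjoint_smul_of_sup_eq_top hsup (g i) (g j) (hdisj hi hj hij)

namespace IsCCoverFam

variable {G : Type*} [Group G] {n : ℕ} {M : Fin n → Subgroup G} (hM : IsCCoverFam n M)
include hM

theorem exists_mem (g : G) : ∃ i, g ∈ M i := by
  classical
  obtain ⟨N, hN, hgN⟩ := hM.2.2.2.1 g
  obtain ⟨i, -, rfl⟩ := Finset.mem_image.1 hN
  exact ⟨i, hgN⟩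

theorem exists_forall_mem_iff_eq (j : Fin n) : ∃ g : G, ∀ i, g ∈ M i ↔ i = j := by
  classical
  obtain ⟨-, -, -, hirr, -⟩ := hM.2
  have hj : M j ∈ univ.image M := mem_image_of_mem M (mem_univ j)
  obtain ⟨g, hg⟩ := hirr _ (erase_ssubset hj)
  have hgj : g ∈ M j := by
    obtain ⟨i, hi⟩ := hM.exists_mem g
    by_contra hgj
    exact hg (M i) (mem_erase.2 ⟨fun h => hgj (h ▸ hi), mem_image_of_mem M (mem_univ i)⟩) hi
  refine ⟨g, fun i => ⟨fun hgi => ?_, fun h => h ▸ hgj⟩⟩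
  by_contra hij
  exact hg (M i) (mem_erase.2 ⟨fun h => hij (hM.1 h), mem_image_of_mem M (mem_univ i)⟩) hgi

theorem eq_bot_of_le {H : Subgroup G} [H.Normal] (hH : ∀ i, H ≤ M i) : H = ⊥ := by
  classical
  rw [eq_bot_iff, ← hM.2.2.2.2.2.2]
  exact Subgroup.normal_le_normalCore.2 (Finset.le_inf fun N hN => by
    obtain ⟨i, -, rfl⟩ := Finset.mem_image.1 hN
    exact hH i)

end IsCCoverFam

theorem IsCCoverFam.card_eq_of_not_le {G : Type*} [CommGroup G] [Finite G] {p : ℕ}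
    [Fact p.Prime] (hG : IsPGroup p G) {n : ℕ} {M : Fin n → Subgroup G} (hM : IsCCoverFam n M)
    {W : Subgroup G} {T : Finset (Fin n)} (hT : #Tᶜ ≤ p) (hWT : ∀ i ∈ T, W ≤ M i)
    {j : Fin n} (hj : ¬W ≤ M j) : Nat.card W = p := by
  classical
  obtain ⟨g, hg⟩ := hM.exists_forall_mem_iff_eq j
  choose x hx using fun k => Subgroup.exists_smul_subgroupOf_of_mul_mem (M k) W g
  set s : Finset (Fin n) := {k ∈ Tᶜ | ¬W ≤ M k}
  have hmem : ∀ {k}, ¬W ≤ M k → k ∈ s := fun hk =>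
    mem_filter.2 ⟨mem_compl.2 fun hkT => hk (hWT _ hkT), hk⟩
  have hs : #s ≤ p := (card_filter_le _ _).trans hT
  have hcovers : ⋃ k ∈ s, x k • ((M k).subgroupOf W : Set W) = Set.univ := by
    refine Set.eq_univ_of_forall fun w => ?_
    obtain ⟨k, hk⟩ := hM.exists_mem (g * w)
    have hks : k ∈ s := hmem fun hWk => hj <| by
      have hgk : g ∈ M k := by simpa using (M k).mul_mem hk ((M k).inv_mem (hWk w.2))
      exact (hg k).1 hgk ▸ hWk
    exact Set.mem_biUnion hks (hx k w hk)
  have hproper : ∀ k ∈ s, (M k).subgroupOf W ≠ ⊤ := fun k hk =>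
    mt Subgroup.subgroupOf_eq_top.1 (mem_filter.1 hk).2
  have hWp := hG.to_subgroup W
  have hbot : M j ⊓ W = ⊥ := hM.eq_bot_of_le fun i => by
    by_cases hi : W ≤ M i
    · exact inf_le_right.trans hi
    · rw [← Subgroup.subgroupOf_map_subtype,
        hWp.eq_of_leftCoset_cover hcovers hs hproper (hmem hj) (hmem hi),
        Subgroup.subgroupOf_map_subtype]
      exact inf_le_left
  have hindex := (hWp.card_eq_and_index_eq_of_leftCoset_cover hcovers hs hproper).2 j (hmem hj)
  rwa [Subgroup.subgroupOf_eq_bot.2 (disjoint_iff.2 hbot), Subgroup.index_bot] at hindex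

theorem statement_15_general (p : ℕ) (hp : p.Prime) (d : ℕ) (n : ℕ)
    (M : Fin n → Subgroup (Fin d → Multiplicative (ZMod p)))
    (hM : IsCCoverFam n M)
    (T : Finset (Fin n)) (hT : T.card = n - p) :
    Nat.card ↥(⨅ i ∈ T, M i) = 1 ∨ Nat.card ↥(⨅ i ∈ T, M i) = p := by
  have : Fact p.Prime := ⟨hp⟩
  have hG : IsPGroup p (Fin d → Multiplicative (ZMod p)) :=
    IsPGroup.of_card (n := d) (by simp [Nat.card_eq_fintype_card, ZMod.card])
  set W := ⨅ i ∈ T, M i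
  by_cases hall : ∀ i, W ≤ M i
  · exact Or.inl (by rw [hM.eq_bot_of_le hall, Subgroup.card_bot])
  obtain ⟨j, hj⟩ := not_forall.1 hall
  have hTc : #Tᶜ ≤ p := by rw [card_compl, Fintype.card_fin]; omega
  exact Or.inr (hM.card_eq_of_not_le hG hTc (fun i hi => iInf₂_le i hi) hj)

theorem statement_15 (p : ℕ) (hp : p.Prime) (d : ℕ) (hd : 2 ≤ d) (n : ℕ)
    (M : Fin n → Subgroup (Fin d → Multiplicative (ZMod p)))
    (hM : IsCCoverFam n M)
    (T : Finset (Fin n)) (hT : T.card = n - p) :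
    Nat.card ↥(⨅ i ∈ T, M i) = 1 ∨ Nat.card ↥(⨅ i ∈ T, M i) = p :=
  statement_15_general p hp d n M hM T hT
end

section
/- Let p be a prime number, let d ≥ 2 be an integer, and suppose G = (C_p)^d has a 𝔠_n-cover {M_1, …, M_n}. Then there exists a subset T of {1, …, n} with |T| = d such that the intersection ⋂_{i ∈ T} M_i is the trivial subgroup. -/
/-!
A maximal subgroup of an elementary abelian `p`-group has index `p`, and in an abelian group
core-freeness says the members of the cover intersect trivially. So as long as the intersection
`K` of the members chosen so far is nontrivial, some member `M i` does not contain `K`, and then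
`|G : M i ⊓ K| = p |G : K|`. After `d` steps the index is `p ^ d = |G|`.
-/

namespace Subgroup

variable {G : Type*} [Group G] {p : ℕ}

theorem index_eq_of_isCoatom (hp : p.Prime) (hexp : ∀ g : G, g ^ p = 1) {M : Subgroup G}
    [M.Normal] (hM : IsCoatom M) : M.index = p := by
  obtain ⟨g, -, hg⟩ := SetLike.exists_of_lt hM.lt_top
  have hsup : M ⊔ zpowers g = ⊤ := hM.2 _ (left_lt_sup.2 (by rwa [zpowers_le]))
  have hdvd : M.index ∣ p := by
    rw [← relIndex_top_right, ← hsup, relIndex_sup_left]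
    refine (relIndex_dvd_card _ _).trans ?_
    rw [Nat.card_zpowers]
    exact orderOf_dvd_of_pow_eq_one (hexp g)
  exact (hp.eq_one_or_self_of_dvd _ hdvd).resolve_left (mt index_eq_one.1 hM.1)

theorem index_inf_eq_mul_of_not_le (hp : p.Prime) {N K : Subgroup G} [N.Normal]
    (hN : N.index = p) (hK : ¬K ≤ N) : (N ⊓ K).index = p * K.index := by
  have hdvd : N.relIndex K ∣ p := hN ▸ relIndex_dvd_index_of_normal N K
  have hrel : N.relIndex K = p :=
    (hp.eq_one_or_self_of_dvd _ hdvd).resolve_left (mt relIndex_eq_one.1 hK)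
  rw [← relIndex_mul_index inf_le_right, inf_relIndex_right, hrel]

theorem eq_bot_of_index_eq_card {H : Subgroup G} (hG : Nat.card G ≠ 0)
    (hH : H.index = Nat.card G) : H = ⊥ := by
  rw [← card_eq_one]
  exact (Nat.mul_eq_right hG).1 (hH ▸ H.card_mul_index)

variable {ι : Type*} (M : ι → Subgroup G) [∀ i, (M i).Normal]

theorem exists_card_eq_index_biInf_eq_pow (hp : p.Prime) {d : ℕ} (hG : Nat.card G = p ^ d)
    (hidx : ∀ i, (M i).index = p) (hbot : ⨅ i, M i = ⊥) {k : ℕ} (hk : k ≤ d) :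
    ∃ T : Finset ι, T.card = k ∧ (⨅ i ∈ T, M i).index = p ^ k := by
  classical
  induction k with
  | zero => exact ⟨∅, rfl, by simp⟩
  | succ k ih =>
    obtain ⟨T, hTcard, hTidx⟩ := ih (by omega)
    obtain ⟨i, hi⟩ : ∃ i, ¬(⨅ j ∈ T, M j) ≤ M i := by
      by_contra! h
      have hK : (⨅ j ∈ T, M j) = ⊥ := le_bot_iff.1 (hbot ▸ le_iInf h)
      rw [hK, index_bot, hG] at hTidx
      have := Nat.pow_right_injective hp.two_le hTidx
      omega
    have hiT : i ∉ T := fun h => hi (biInf_le M h)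
    refine ⟨insert i T, by rw [Finset.card_insert_of_notMem hiT, hTcard], ?_⟩
    rw [Finset.iInf_insert, index_inf_eq_mul_of_not_le hp (hidx i) hi, hTidx, pow_succ, mul_comm]

theorem exists_card_eq_biInf_eq_bot (hp : p.Prime) {d : ℕ} (hG : Nat.card G = p ^ d)
    (hidx : ∀ i, (M i).index = p) (hbot : ⨅ i, M i = ⊥) :
    ∃ T : Finset ι, T.card = d ∧ ⨅ i ∈ T, M i = ⊥ := by
  obtain ⟨T, hTcard, hTidx⟩ := exists_card_eq_index_biInf_eq_pow M hp hG hidx hbot le_rfl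
  have hcard : Nat.card G ≠ 0 := hG ▸ pow_ne_zero d hp.ne_zero
  exact ⟨T, hTcard, eq_bot_of_index_eq_card hcard (hTidx.trans hG.symm)⟩

end Subgroup

theorem Pi.multiplicative_zmod_pow_eq_one {ι : Type*} (p : ℕ) [NeZero p]
    (g : ι → Multiplicative (ZMod p)) : g ^ p = 1 := by
  funext i
  simpa [Nat.card_eq_fintype_card] using pow_card_eq_one' (x := g i)

theorem statement_16_general (p : ℕ) (hp : p.Prime) (d : ℕ) (n : ℕ)
    (M : Fin n → Subgroup (Fin d → Multiplicative (ZMod p)))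
    (hM : IsCCoverFam n M) :
    ∃ T : Finset (Fin n), T.card = d ∧ (⨅ i ∈ T, M i) = ⊥ := by
  classical
  have : NeZero p := ⟨hp.ne_zero⟩
  obtain ⟨-, -, -, -, -, hcoatom, hcore⟩ := hM
  have hidx (i : Fin n) : (M i).index = p :=
    Subgroup.index_eq_of_isCoatom hp (Pi.multiplicative_zmod_pow_eq_one p) (hcoatom _ (by simp))
  have hbot : ⨅ i, M i = ⊥ := by
    rw [← Finset.inf_univ_eq_iInf, ← hcore, Subgroup.normalCore_eq_self, Finset.inf_image,
      Function.id_comp]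
  exact Subgroup.exists_card_eq_biInf_eq_bot M hp (by simp) hidx hbot

theorem statement_16 (p : ℕ) (hp : p.Prime) (d : ℕ) (hd : 2 ≤ d) (n : ℕ)
    (M : Fin n → Subgroup (Fin d → Multiplicative (ZMod p)))
    (hM : IsCCoverFam n M) :
    ∃ T : Finset (Fin n), T.card = d ∧ (⨅ i ∈ T, M i) = ⊥ :=
  statement_16_general p hp d n M hM
end
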